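/- arXiv:1108.0921 — 8 statements merged into one kernel-verified Lean document; each statement's English description precedes it below -/
import Mathlib

section
/- Let β > 0 and let ψ be a continuous probability density on ℝ with ψ(−s) = ψ(s) > 0 for all s ∈ ℝ and ψ nonincreasing on [0,∞). Let μ be a Borel probability measure on C([0,1],ℝ) such that for every d ∈ ℕ, all t₁,…,t_d ∈ [0,1] and all x₁,…,x_d ≤ 0 one has μ{ω : ω(t_j) ≤ x_j for 1 ≤ j ≤ d} = exp(−∫_ℝ max_{1≤j≤d}(|x_j| ψ(s − β t_j)) ds). Then for every bounded function f : [0,1] → (−∞,0] with at most finitely many discontinuities, μ{ω : ω(t) ≤ f(t) for all t ∈ [0,1]} = exp(−∫_ℝ sup_{t∈[0,1]}(|f(t)| ψ(s − β t)) ds). -/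
open MeasureTheory ProbabilityTheory Filter Topology

noncomputable instance : MeasurableSpace C(Set.Icc (0:ℝ) 1, ℝ) := borel _

/-! Pick a dense sequence `e` in `[0, 1]` passing through the finitely many discontinuities of `f`.
As `ω` is continuous and `f` is continuous off `range e`, the event `{ω ≤ f}` is the decreasing
intersection of the finite-dimensional events `{ω (e j) ≤ f (e j), j ≤ n}`, and for the same reason
the supremum over `t ∈ [0, 1]` in the exponent is the supremum over the sequence. Continuity of `μ`
from above and dominated convergence pass to the limit in the finite-dimensional formula; the
domination holds because a symmetric unimodal integrable `ψ` has an integrable envelope over all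
its translates `ψ (· - u)`, `u ∈ [0, β]`. -/

open Set

instance : BorelSpace C(Set.Icc (0:ℝ) 1, ℝ) := ⟨rfl⟩

theorem apply_le_apply_of_abs_le {ψ : ℝ → ℝ} (hsymm : ∀ s, ψ (-s) = ψ s)
    (hanti : AntitoneOn ψ (Ici 0)) {x y : ℝ} (h : |x| ≤ |y|) : ψ y ≤ ψ x := by
  have habs : ∀ z, ψ |z| = ψ z := fun z => by
    rcases abs_choice z with hz | hz <;> simp [hz, hsymm]
  rw [← habs x, ← habs y]
  exact hanti (abs_nonneg x) (abs_nonneg y) h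

theorem exists_integrable_forall_apply_sub_le {ψ : ℝ → ℝ} (hsymm : ∀ s, ψ (-s) = ψ s)
    (hanti : AntitoneOn ψ (Ici 0)) (hint : Integrable ψ) (a b : ℝ) :
    ∃ M : ℝ → ℝ, Integrable M ∧ ∀ u ∈ Icc a b, ∀ s, ψ (s - u) ≤ M s := by
  refine ⟨fun s => ψ (s - a) ⊔ ψ (s - b) ⊔ (Icc a b).indicator (fun _ => ψ 0) s, ?_, ?_⟩
  · exact ((hint.comp_sub_right a).sup (hint.comp_sub_right b)).sup
      ((integrableOn_const measure_Icc_lt_top.ne).integrable_indicator measurableSet_Icc)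
  -- Outside `[a, b]` the nearer endpoint is closer to `s` than `u` is; inside, use the peak `ψ 0`.
  rintro u ⟨hau, hub⟩ s
  rcases lt_or_ge s a with hsa | hsa
  · refine le_sup_of_le_left (le_sup_of_le_left (apply_le_apply_of_abs_le hsymm hanti ?_))
    rw [abs_of_neg (by linarith), abs_of_neg (by linarith)]
    linarith
  rcases lt_or_ge b s with hbs | hbs
  · refine le_sup_of_le_left (le_sup_of_le_right (apply_le_apply_of_abs_le hsymm hanti ?_))
    rw [abs_of_pos (by linarith), abs_of_pos (by linarith)]
    linarith
  refine le_sup_of_le_right (le_of_le_of_eq ?_ (indicator_of_mem (mem_Icc.2 ⟨hsa, hbs⟩) _).symm)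
  exact apply_le_apply_of_abs_le hsymm hanti (by simp)

theorem Set.Countable.exists_denseRange_superset {X : Type*} [TopologicalSpace X]
    [TopologicalSpace.SeparableSpace X] [Nonempty X] {S : Set X} (hS : S.Countable) :
    ∃ e : ℕ → X, DenseRange e ∧ S ⊆ range e := by
  obtain ⟨u, hu⟩ := TopologicalSpace.exists_dense_seq X
  obtain ⟨e, he⟩ := ((countable_range u).union hS).exists_eq_range
    ((range_nonempty u).mono subset_union_left)
  refine ⟨e, ?_, he ▸ subset_union_right⟩
  simpa only [DenseRange, ← he] using hu.mono subset_union_left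

section DenseRange

variable {X ι : Type*} [TopologicalSpace X] {e : ι → X}

theorem DenseRange.le_of_forall_comp_le (he : DenseRange e) {g h : X → ℝ}
    (hcont : ∀ t ∉ range e, ContinuousAt g t ∧ ContinuousAt h t)
    (hle : ∀ k, g (e k) ≤ h (e k)) (t : X) : g t ≤ h t := by
  by_cases ht : t ∈ range e
  · obtain ⟨k, rfl⟩ := ht
    exact hle k
  have : (𝓝[range e] t).NeBot := mem_closure_iff_nhdsWithin_neBot.1 (he t)
  exact le_of_tendsto_of_tendsto ((hcont t ht).1.mono_left nhdsWithin_le_nhds)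
    ((hcont t ht).2.mono_left nhdsWithin_le_nhds)
    (eventually_nhdsWithin_of_forall (forall_mem_range.2 hle))

theorem DenseRange.ciSup_comp_eq [Nonempty ι] (he : DenseRange e) {φ : X → ℝ}
    (hbdd : BddAbove (range φ)) (hcont : ∀ t ∉ range e, ContinuousAt φ t) :
    ⨆ k, φ (e k) = ⨆ t, φ t := by
  have : Nonempty X := Nonempty.map e ‹_›
  refine le_antisymm (ciSup_le fun k => le_ciSup hbdd (e k)) (ciSup_le fun t => ?_)
  exact he.le_of_forall_comp_le (h := fun _ => ⨆ k, φ (e k))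
    (fun t ht => ⟨hcont t ht, continuousAt_const⟩)
    (fun k => le_ciSup (hbdd.mono (range_comp_subset_range e φ)) k) t

end DenseRange

theorem tendsto_ciSup_fin_succ {α : Type*} [ConditionallyCompleteLinearOrder α]
    [TopologicalSpace α] [OrderTopology α] {u : ℕ → α} (hu : BddAbove (range u)) :
    Tendsto (fun n => ⨆ j : Fin (n + 1), u j) atTop (𝓝 (⨆ k, u k)) := by
  have hbdd (n : ℕ) : BddAbove (range fun j : Fin (n + 1) => u j) := (finite_range _).bddAbove
  have hle (n : ℕ) : ⨆ j : Fin (n + 1), u j ≤ ⨆ k, u k := ciSup_le fun j => le_ciSup hu j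
  have hmono : Monotone fun n => ⨆ j : Fin (n + 1), u j := fun m n hmn =>
    ciSup_le fun j => le_ciSup (hbdd n) (Fin.castLE (by omega) j)
  convert tendsto_atTop_ciSup hmono ⟨_, forall_mem_range.2 hle⟩ using 2
  exact le_antisymm (ciSup_le fun k => le_ciSup_of_le ⟨_, forall_mem_range.2 hle⟩ k
    (le_ciSup_of_le (hbdd k) (Fin.last k) (by simp))) (ciSup_le hle)

theorem tendsto_integral_ciSup_fin_succ {α : Type*} [MeasurableSpace α] {ν : Measure α}
    {g : ℕ → α → ℝ} {M : α → ℝ} (hg : ∀ k, Measurable (g k)) (hM : Integrable M ν)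
    (hgM : ∀ k s, |g k s| ≤ M s) :
    Tendsto (fun n => ∫ s, ⨆ j : Fin (n + 1), g j s ∂ν) atTop (𝓝 (∫ s, ⨆ k, g k s ∂ν)) := by
  have hbdd (s : α) : BddAbove (range fun k => g k s) :=
    ⟨M s, forall_mem_range.2 fun k => (le_abs_self _).trans (hgM k s)⟩
  refine tendsto_integral_of_dominated_convergence M
    (fun n => (Measurable.iSup fun j : Fin (n + 1) => hg j).aestronglyMeasurable) hM
    (fun n => ae_of_all _ fun s => ?_) (ae_of_all _ fun s => tendsto_ciSup_fin_succ (hbdd s))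
  have hbddn : BddAbove (range fun j : Fin (n + 1) => g j s) := (finite_range _).bddAbove
  refine abs_le.2 ⟨?_, ciSup_le fun j => (le_abs_self _).trans (hgM j s)⟩
  exact (neg_abs_le _).trans' (neg_le_neg (hgM 0 s)) |>.trans (le_ciSup hbddn 0)

theorem tendsto_measure_forall_fin_succ_le {X : Type*} [TopologicalSpace X]
    [MeasurableSpace C(X, ℝ)] [OpensMeasurableSpace C(X, ℝ)] (μ : Measure C(X, ℝ))
    [IsFiniteMeasure μ] (e : ℕ → X) (x : ℕ → ℝ) :
    Tendsto (fun n => μ {ω | ∀ j : Fin (n + 1), ω (e j) ≤ x j}) atTop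
      (𝓝 (μ {ω | ∀ k, ω (e k) ≤ x k})) := by
  have hclosed (n : ℕ) : IsClosed {ω : C(X, ℝ) | ∀ j : Fin (n + 1), ω (e j) ≤ x j} := by
    simp only [ofPred_forall]
    exact isClosed_iInter fun j => isClosed_le (continuous_eval_const _) continuous_const
  have hinter : {ω : C(X, ℝ) | ∀ k, ω (e k) ≤ x k}
      = ⋂ n, {ω | ∀ j : Fin (n + 1), ω (e j) ≤ x j} := by
    ext ω
    simp only [mem_ofPred_eq, mem_iInter]
    exact ⟨fun h n j => h j, fun h k => h k ⟨k, k.lt_succ_self⟩⟩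
  rw [hinter]
  exact tendsto_measure_iInter_atTop (fun n => (hclosed n).measurableSet.nullMeasurableSet)
    (fun m n hmn ω hω j => hω (Fin.castLE (by omega) j)) ⟨0, measure_ne_top μ _⟩

theorem stmt0_general
    (β : ℝ) (hβ : 0 < β)
    (ψ : ℝ → ℝ) (hψcont : Continuous ψ) (hψpos : ∀ s, 0 < ψ s)
    (hψsymm : ∀ s, ψ (-s) = ψ s) (hψanti : AntitoneOn ψ (Set.Ici 0))
    (hψint : Integrable ψ)
    (μ : Measure C(Set.Icc (0:ℝ) 1, ℝ)) [IsProbabilityMeasure μ]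
    (hfidi : ∀ (d : ℕ) (t : Fin d → Set.Icc (0:ℝ) 1) (x : Fin d → ℝ), (∀ j, x j ≤ 0) →
      μ {ω | ∀ j, ω (t j) ≤ x j}
        = ENNReal.ofReal (Real.exp (-∫ s, ⨆ j, |x j| * ψ (s - β * (t j : ℝ)))))
    (f : Set.Icc (0:ℝ) 1 → ℝ)
    (hfbd : ∃ B, ∀ t, |f t| ≤ B)
    (hfnonpos : ∀ t, f t ≤ 0)
    (hfdisc : {t | ¬ ContinuousAt f t}.Finite) :
    μ {ω | ∀ t, ω t ≤ f t}
      = ENNReal.ofReal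
          (Real.exp (-∫ s, ⨆ t : Set.Icc (0:ℝ) 1, |f t| * ψ (s - β * (t : ℝ)))) := by
  obtain ⟨B, hB⟩ := hfbd
  obtain ⟨M, hMint, hM⟩ := exists_integrable_forall_apply_sub_le hψsymm hψanti hψint 0 β
  obtain ⟨e, he, hdisc⟩ := hfdisc.countable.exists_denseRange_superset
  have hfe (t) (ht : t ∉ range e) : ContinuousAt f t := by_contra fun h => ht (hdisc h)
  set φ : ℝ → Icc (0:ℝ) 1 → ℝ := fun s t => |f t| * ψ (s - β * t)
  have hφM (s t) : |φ s t| ≤ B * M s := by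
    rw [abs_mul, abs_abs, abs_of_pos (hψpos _)]
    have hβt : β * t ∈ Icc 0 β := ⟨mul_nonneg hβ.le t.2.1, mul_le_of_le_one_right hβ.le t.2.2⟩
    exact mul_le_mul (hB t) (hM _ hβt s) (hψpos _).le ((abs_nonneg _).trans (hB t))
  have hsup (s : ℝ) : ⨆ k, φ s (e k) = ⨆ t, φ s t :=
    he.ciSup_comp_eq ⟨B * M s, forall_mem_range.2 fun t => (le_abs_self _).trans (hφM s t)⟩
      fun t ht => (hfe t ht).abs.mul (by fun_prop)
  have hset : {ω : C(Icc (0:ℝ) 1, ℝ) | ∀ k, ω (e k) ≤ f (e k)} = {ω | ∀ t, ω t ≤ f t} :=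
    Set.ext fun ω => ⟨fun h => he.le_of_forall_comp_le
      (fun t ht => ⟨ω.continuous.continuousAt, hfe t ht⟩) h, fun h k => h (e k)⟩
  have hμ := tendsto_measure_forall_fin_succ_le μ e (f ∘ e)
  simp only [Function.comp_apply, hset,
    fun n => hfidi (n + 1) (fun j => e j) (fun j => f (e j)) fun j => hfnonpos _] at hμ
  refine tendsto_nhds_unique hμ ?_
  have hint := tendsto_integral_ciSup_fin_succ (g := fun k s => φ s (e k))
    (fun k => by fun_prop) (hMint.const_mul B) fun k s => hφM s (e k)
  simp only [hsup] at hint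
  exact (ENNReal.continuous_ofReal.comp (Real.continuous_exp.comp continuous_neg)).tendsto _
    |>.comp hint

/-- the functional distribution function of a standard extreme value
process is determined by its finite dimensional distributions. -/
theorem stmt0
    (β : ℝ) (hβ : 0 < β)
    (ψ : ℝ → ℝ) (hψcont : Continuous ψ) (hψpos : ∀ s, 0 < ψ s)
    (hψsymm : ∀ s, ψ (-s) = ψ s) (hψanti : AntitoneOn ψ (Set.Ici 0))
    (hψint : Integrable ψ) (hψprob : ∫ s, ψ s = 1)
    (μ : Measure C(Set.Icc (0:ℝ) 1, ℝ)) [IsProbabilityMeasure μ]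
    (hfidi : ∀ (d : ℕ) (t : Fin d → Set.Icc (0:ℝ) 1) (x : Fin d → ℝ), (∀ j, x j ≤ 0) →
      μ {ω | ∀ j, ω (t j) ≤ x j}
        = ENNReal.ofReal (Real.exp (-∫ s, ⨆ j, |x j| * ψ (s - β * (t j : ℝ)))))
    (f : Set.Icc (0:ℝ) 1 → ℝ)
    (hfbd : ∃ B, ∀ t, |f t| ≤ B)
    (hfnonpos : ∀ t, f t ≤ 0)
    (hfdisc : {t | ¬ ContinuousAt f t}.Finite) :
    μ {ω | ∀ t, ω t ≤ f t}
      = ENNReal.ofReal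
          (Real.exp (-∫ s, ⨆ t : Set.Icc (0:ℝ) 1, |f t| * ψ (s - β * (t : ℝ)))) :=
  stmt0_general β hβ ψ hψcont hψpos hψsymm hψanti hψint μ hfidi f hfbd hfnonpos hfdisc
end

section
/- Let f : [0,1] → [0,∞) be a bounded function whose set D of discontinuity points is finite, let Q ⊆ [0,1] be a dense subset with D ⊆ Q, and let h : [0,1] → [0,∞) be continuous. Then sup_{t∈Q}(f(t)·h(t)) = sup_{t∈[0,1]}(f(t)·h(t)). -/
open Filter Topology

/-- for a bounded nonnegative function `f` on `[0,1]` with finitely many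
discontinuities, all of which lie in a dense subset `Q` of `[0,1]`, and a continuous
nonnegative `h`, the supremum of `f * h` over `Q` equals the supremum over `[0,1]`. -/
theorem stmt1
    (f h : ℝ → ℝ)
    (hf0 : ∀ t ∈ Set.Icc (0:ℝ) 1, 0 ≤ f t)
    (hfbd : ∃ B, ∀ t ∈ Set.Icc (0:ℝ) 1, f t ≤ B)
    (Q : Set ℝ) (hQsub : Q ⊆ Set.Icc (0:ℝ) 1)
    (hQdense : Set.Icc (0:ℝ) 1 ⊆ closure Q)
    (hDfin : {t ∈ Set.Icc (0:ℝ) 1 | ¬ ContinuousWithinAt f (Set.Icc (0:ℝ) 1) t}.Finite)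
    (hDQ : {t ∈ Set.Icc (0:ℝ) 1 | ¬ ContinuousWithinAt f (Set.Icc (0:ℝ) 1) t} ⊆ Q)
    (hhcont : ContinuousOn h (Set.Icc (0:ℝ) 1))
    (hh0 : ∀ t ∈ Set.Icc (0:ℝ) 1, 0 ≤ h t) :
    ⨆ t : Q, f t * h t = ⨆ t : Set.Icc (0:ℝ) 1, f t * h t := by
  obtain ⟨B, hB⟩ := hfbd
  have h0I : (0:ℝ) ∈ Set.Icc (0:ℝ) 1 := by constructor <;> norm_num
  have hB0 : 0 ≤ B := le_trans (hf0 0 h0I) (hB 0 h0I)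
  -- bound for h
  obtain ⟨C, hC⟩ : ∃ C, ∀ t ∈ Set.Icc (0:ℝ) 1, h t ≤ C := by
    obtain ⟨C, hC⟩ := (isCompact_Icc.image_of_continuousOn hhcont).bddAbove
    exact ⟨C, fun t ht => hC ⟨t, ht, rfl⟩⟩
  have hbound : ∀ t ∈ Set.Icc (0:ℝ) 1, f t * h t ≤ B * C := fun t ht =>
    le_trans (mul_le_mul_of_nonneg_right (hB t ht) (hh0 t ht))
      (mul_le_mul_of_nonneg_left (hC t ht) hB0)
  have hQne : Q.Nonempty := by
    rcases Set.eq_empty_or_nonempty Q with rfl | hne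
    · simpa using hQdense h0I
    · exact hne
  have hbddQ : BddAbove (Set.range fun t : Q => f t * h t) := by
    refine ⟨B * C, ?_⟩
    rintro x ⟨⟨t, ht⟩, rfl⟩
    exact hbound t (hQsub ht)
  have hbddI : BddAbove (Set.range fun t : Set.Icc (0:ℝ) 1 => f t * h t) := by
    refine ⟨B * C, ?_⟩
    rintro x ⟨⟨t, ht⟩, rfl⟩
    exact hbound t ht
  have key : ∀ t ∈ Set.Icc (0:ℝ) 1, f t * h t ≤ ⨆ s : Q, f s * h s := by
    intro t ht
    by_cases htQ : t ∈ Q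
    · exact le_ciSup hbddQ (⟨t, htQ⟩ : Q)
    · have hfc : ContinuousWithinAt f (Set.Icc (0:ℝ) 1) t := by
        by_contra hc
        exact htQ (hDQ ⟨ht, hc⟩)
      have hgc : ContinuousWithinAt (fun s => f s * h s) (Set.Icc (0:ℝ) 1) t :=
        hfc.mul (hhcont.continuousWithinAt ht)
      have hne : (𝓝[Q] t).NeBot := mem_closure_iff_nhdsWithin_neBot.mp (hQdense ht)
      have htend : Tendsto (fun s => f s * h s) (𝓝[Q] t) (𝓝 (f t * h t)) :=
        hgc.mono_left (nhdsWithin_mono _ hQsub)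
      refine le_of_tendsto htend ?_
      filter_upwards [self_mem_nhdsWithin] with s hs
      exact le_ciSup hbddQ (⟨s, hs⟩ : Q)
  have : Nonempty Q := hQne.to_subtype
  refine le_antisymm (ciSup_le fun ⟨t, ht⟩ => le_ciSup hbddI (⟨t, hQsub ht⟩ : Set.Icc (0:ℝ) 1))
    (ciSup_le fun ⟨t, ht⟩ => key t ht)
end

section
/- Let β > 0 and let ψ be a continuous probability density on ℝ with ψ(−s) = ψ(s) > 0 for all s ∈ ℝ and ψ nonincreasing on [0,∞), and let Ψ(x) = ∫_{−∞}^x ψ(s) ds be its distribution function. Then ∫_ℝ inf_{t∈[0,1]} ψ(s − β t) ds = 2(1 − Ψ(β/2)) = 2Ψ(−β/2). -/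
open MeasureTheory

/-- `∫ inf_{t∈[0,1]} ψ(s - βt) ds = 2(1 - Ψ(β/2)) = 2Ψ(-β/2)`. -/
theorem stmt4
    (β : ℝ) (hβ : 0 < β)
    (ψ : ℝ → ℝ) (hψcont : Continuous ψ) (hψpos : ∀ s, 0 < ψ s)
    (hψsymm : ∀ s, ψ (-s) = ψ s) (hψanti : AntitoneOn ψ (Set.Ici 0))
    (hψint : Integrable ψ) (hψprob : ∫ s, ψ s = 1) :
    (∫ s, ⨅ t : Set.Icc (0:ℝ) 1, ψ (s - β * (t : ℝ)))
        = 2 * (1 - ∫ u in Set.Iic (β / 2), ψ u)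
    ∧ (∫ s, ⨅ t : Set.Icc (0:ℝ) 1, ψ (s - β * (t : ℝ)))
        = 2 * ∫ u in Set.Iic (-(β / 2)), ψ u := by
  have habs : ∀ x : ℝ, ψ |x| = ψ x := by
    intro x
    rcases abs_choice x with h | h
    · rw [h]
    · rw [h, hψsymm]
  have hmono : ∀ x y : ℝ, |x| ≤ |y| → ψ y ≤ ψ x := by
    intro x y h
    rw [← habs x, ← habs y]
    exact hψanti (abs_nonneg x) (abs_nonneg y) h
  -- pointwise identification of the infimum
  have hinf : ∀ s : ℝ, (⨅ t : Set.Icc (0:ℝ) 1, ψ (s - β * (t : ℝ)))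
      = min (ψ (s - β)) (ψ s) := by
    intro s
    have hbdd : BddBelow (Set.range fun t : Set.Icc (0:ℝ) 1 => ψ (s - β * (t : ℝ))) := by
      refine ⟨0, ?_⟩
      rintro _ ⟨t, rfl⟩
      exact (hψpos _).le
    apply le_antisymm
    · apply le_min
      · have := ciInf_le hbdd (⟨1, Set.mem_Icc.mpr ⟨zero_le_one, le_rfl⟩⟩ : Set.Icc (0:ℝ) 1)
        simpa using this
      · have := ciInf_le hbdd (⟨0, Set.mem_Icc.mpr ⟨le_rfl, zero_le_one⟩⟩ : Set.Icc (0:ℝ) 1)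
        simpa using this
    · apply le_ciInf
      rintro ⟨t, ht⟩
      rw [Set.mem_Icc] at ht
      have hx1 : s - β ≤ s - β * t := by nlinarith [ht.1, ht.2]
      have hx2 : s - β * t ≤ s := by nlinarith [ht.1, ht.2]
      rcases le_total |s - β| |s| with h | h
      · refine le_trans (min_le_right _ _) (hmono _ _ ?_)
        rw [abs_le] at h ⊢
        constructor <;> [linarith [h.1, neg_abs_le s]; linarith [le_abs_self s]]
      · refine le_trans (min_le_left _ _) (hmono _ _ ?_)
        rw [abs_le] at h ⊢
        constructor <;> [linarith [neg_abs_le (s - β)]; linarith [h.2, le_abs_self (s - β)]]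
  have hg_cont : Continuous fun s => min (ψ (s - β)) (ψ s) :=
    (hψcont.comp (continuous_id.sub continuous_const)).min hψcont
  have hg_pos : ∀ s, 0 < min (ψ (s - β)) (ψ s) := fun s => lt_min (hψpos _) (hψpos _)
  have hg_int : Integrable fun s => min (ψ (s - β)) (ψ s) := by
    refine Integrable.mono' hψint hg_cont.aestronglyMeasurable ?_
    filter_upwards with s
    rw [Real.norm_eq_abs, abs_of_pos (hg_pos s)]
    exact min_le_right _ _
  have hrw : (∫ s, ⨅ t : Set.Icc (0:ℝ) 1, ψ (s - β * (t : ℝ)))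
      = ∫ s, min (ψ (s - β)) (ψ s) := by
    simp only [hinf]
  -- split the integral at β/2
  have hsplit : (∫ s, min (ψ (s - β)) (ψ s))
      = (∫ s in Set.Iic (β / 2), min (ψ (s - β)) (ψ s))
        + ∫ s in Set.Ioi (β / 2), min (ψ (s - β)) (ψ s) :=
    (intervalIntegral.integral_Iic_add_Ioi hg_int.integrableOn hg_int.integrableOn).symm
  have hleft : (∫ s in Set.Iic (β / 2), min (ψ (s - β)) (ψ s))
      = ∫ s in Set.Iic (β / 2), ψ (s - β) := by
    refine setIntegral_congr_fun measurableSet_Iic fun s hs => ?_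
    refine min_eq_left (hmono _ _ ?_)
    have hs' : s ≤ β / 2 := hs
    have h1 : |s - β| = β - s := by
      rw [abs_sub_comm, abs_of_nonneg (by linarith)]
    rw [h1, abs_le]
    constructor <;> linarith
  have hright : (∫ s in Set.Ioi (β / 2), min (ψ (s - β)) (ψ s))
      = ∫ s in Set.Ioi (β / 2), ψ s := by
    refine setIntegral_congr_fun measurableSet_Ioi fun s hs => ?_
    refine min_eq_right (hmono _ _ ?_)
    have hs' : (β / 2) < s := hs
    have h1 : |s| = s := abs_of_pos (by linarith)
    rw [h1, abs_le]
    constructor <;> linarith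
  -- translation: ∫_{Iic (β/2)} ψ(s-β) = ∫_{Iic (-(β/2))} ψ
  have htrans : (∫ s in Set.Iic (β / 2), ψ (s - β)) = ∫ u in Set.Iic (-(β / 2)), ψ u := by
    have hemb : MeasurableEmbedding (fun x : ℝ => x - β) :=
      (MeasurableEquiv.subRight β).measurableEmbedding
    have hmp : MeasurePreserving (fun x : ℝ => x - β) volume volume :=
      measurePreserving_sub_right volume β
    have := hmp.setIntegral_preimage_emb hemb ψ (Set.Iic (-(β / 2)))
    have hpre : (fun x : ℝ => x - β) ⁻¹' Set.Iic (-(β / 2)) = Set.Iic (β / 2) := by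
      ext x
      simp only [Set.mem_preimage, Set.mem_Iic]
      constructor <;> intro h <;> linarith
    rwa [hpre] at this
  -- symmetry: ∫_{Iic (-(β/2))} ψ = ∫_{Ioi (β/2)} ψ
  have hsym : (∫ u in Set.Iic (-(β / 2)), ψ u) = ∫ u in Set.Ioi (β / 2), ψ u := by
    have := integral_comp_neg_Ioi (β / 2) ψ
    simp only [hψsymm] at this
    exact this.symm
  -- the right tail equals 1 - Ψ(β/2)
  have htail : (∫ u in Set.Ioi (β / 2), ψ u) = 1 - ∫ u in Set.Iic (β / 2), ψ u := by
    have := intervalIntegral.integral_Iic_add_Ioi (b := β / 2) hψint.integrableOn hψint.integrableOn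
    rw [hψprob] at this
    linarith
  have hmain : (∫ s, ⨅ t : Set.Icc (0:ℝ) 1, ψ (s - β * (t : ℝ)))
      = 2 * ∫ u in Set.Ioi (β / 2), ψ u := by
    rw [hrw, hsplit, hleft, hright, htrans, hsym]; ring
  constructor
  · rw [hmain, htail]
  · rw [hmain, hsym]
end

section
/- Let β > 0 and let ψ be a continuous probability density on ℝ with ψ(−s) = ψ(s) > 0 for all s ∈ ℝ and ψ nonincreasing on [0,∞). Then the map N(f) = ∫_ℝ sup_{t∈[0,1]}(|f(t)| ψ(s − β t)) ds is a norm on the vector space of bounded functions f : [0,1] → ℝ with at most finitely many discontinuities: N(f) is finite, N(f) = 0 if and only if f = 0, N(λf) = |λ|·N(f) for all λ ∈ ℝ, and N(f + g) ≤ N(f) + N(g). -/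
open MeasureTheory

/-- The `D`-norm functional generated by `ψ` and `β`. -/
noncomputable def Dnorm (β : ℝ) (ψ : ℝ → ℝ) (f : Set.Icc (0:ℝ) 1 → ℝ) : ℝ :=
  ∫ s, ⨆ t : Set.Icc (0:ℝ) 1, |f t| * ψ (s - β * (t : ℝ))

/-- Membership in `E[0,1]`: bounded with at most finitely many discontinuities. -/
def MemE (f : Set.Icc (0:ℝ) 1 → ℝ) : Prop :=
  (∃ B, ∀ t, |f t| ≤ B) ∧ {t | ¬ ContinuousAt f t}.Finite

/-!
Homogeneity and the triangle inequality hold pointwise in `s` for the integrand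
`s ↦ sup_t |f t| ψ (s - β t)`, and integrate. For integrability, the integrand is lower
semicontinuous, and since `ψ` is even and nonincreasing on `[0, ∞)`, every translate `ψ (· - c)`
with `c ∈ [0, β]` is dominated by the integrable `ψ s + ψ (s - β) + ψ 0 · 1_[0,β](s)`.
Definiteness: `ψ > 0` makes the integrand of a nonzero `f` positive everywhere.
-/

section SymmetricUnimodal

variable {ψ : ℝ → ℝ}

theorem Function.Even.apply_abs (hψ : Function.Even ψ) (x : ℝ) : ψ |x| = ψ x := by
  rcases abs_choice x with h | h <;> rw [h]
  exact hψ x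

theorem Function.Even.apply_le_of_abs_le (hψ : Function.Even ψ)
    (hanti : AntitoneOn ψ (Set.Ici 0)) {x y : ℝ} (h : |y| ≤ |x|) : ψ x ≤ ψ y := by
  rw [← hψ.apply_abs x, ← hψ.apply_abs y]
  exact hanti (abs_nonneg y) (abs_nonneg x) h

theorem Function.Even.bddAbove_range (hψ : Function.Even ψ)
    (hanti : AntitoneOn ψ (Set.Ici 0)) : BddAbove (Set.range ψ) :=
  ⟨ψ 0, by
    rintro _ ⟨x, rfl⟩
    exact hψ.apply_le_of_abs_le hanti (by simp)⟩

noncomputable def translateEnvelope (β : ℝ) (ψ : ℝ → ℝ) (s : ℝ) : ℝ :=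
  ψ s + ψ (s - β) + (Set.Icc 0 β).indicator (fun _ => ψ 0) s

theorem Function.Even.apply_sub_le_translateEnvelope (hψ : Function.Even ψ)
    (hanti : AntitoneOn ψ (Set.Ici 0)) (hψ0 : ∀ s, 0 ≤ ψ s) {β c : ℝ} (hc : c ∈ Set.Icc 0 β)
    (s : ℝ) : ψ (s - c) ≤ translateEnvelope β ψ s := by
  obtain ⟨hc0, hcβ⟩ := hc
  have hind : 0 ≤ (Set.Icc 0 β).indicator (fun _ => ψ 0) s :=
    Set.indicator_nonneg (fun _ _ => hψ0 0) s
  have hψs := hψ0 s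
  have hψsβ := hψ0 (s - β)
  unfold translateEnvelope
  rcases le_or_gt s 0 with hs | hs
  · have : ψ (s - c) ≤ ψ s :=
      hψ.apply_le_of_abs_le hanti (by rw [abs_of_nonpos hs, abs_of_nonpos (by linarith)]; linarith)
    linarith
  rcases le_or_gt s β with hsβ | hsβ
  · have : ψ (s - c) ≤ ψ 0 := hψ.apply_le_of_abs_le hanti (by simp)
    rw [Set.indicator_of_mem (Set.mem_Icc.mpr ⟨hs.le, hsβ⟩)]
    linarith
  · have : ψ (s - c) ≤ ψ (s - β) :=
      hψ.apply_le_of_abs_le hanti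
        (by rw [abs_of_pos (by linarith), abs_of_pos (by linarith)]; linarith)
    linarith

theorem integrable_translateEnvelope (hψ : Integrable ψ) (β : ℝ) :
    Integrable (translateEnvelope β ψ) := by
  refine (hψ.add (hψ.comp_sub_right β)).add ?_
  rw [integrable_indicator_iff measurableSet_Icc]
  exact integrableOn_const measure_Icc_lt_top.ne

end SymmetricUnimodal

namespace Dnorm

variable {β : ℝ} {ψ : ℝ → ℝ} {f g : Set.Icc (0:ℝ) 1 → ℝ} {B C : ℝ}

noncomputable def profile (β : ℝ) (ψ : ℝ → ℝ) (f : Set.Icc (0:ℝ) 1 → ℝ) (s : ℝ) : ℝ :=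
  ⨆ t : Set.Icc (0:ℝ) 1, |f t| * ψ (s - β * (t : ℝ))

theorem bddAbove_range (hψ0 : ∀ s, 0 ≤ ψ s) (hψbdd : BddAbove (Set.range ψ)) (hf : ∀ t, |f t| ≤ B)
    (s : ℝ) : BddAbove (Set.range fun t : Set.Icc (0:ℝ) 1 => |f t| * ψ (s - β * (t : ℝ))) := by
  obtain ⟨M, hM⟩ := hψbdd
  refine ⟨B * M, ?_⟩
  rintro _ ⟨t, rfl⟩
  exact mul_le_mul (hf t) (hM ⟨_, rfl⟩) (hψ0 _) ((abs_nonneg _).trans (hf t))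

theorem le_profile (hψ0 : ∀ s, 0 ≤ ψ s) (hψbdd : BddAbove (Set.range ψ)) (hf : ∀ t, |f t| ≤ B)
    (s : ℝ) (t : Set.Icc (0:ℝ) 1) : |f t| * ψ (s - β * (t : ℝ)) ≤ profile β ψ f s :=
  le_ciSup (bddAbove_range hψ0 hψbdd hf s) t

theorem profile_nonneg (hψ0 : ∀ s, 0 ≤ ψ s) (hψbdd : BddAbove (Set.range ψ)) (hf : ∀ t, |f t| ≤ B)
    (s : ℝ) : 0 ≤ profile β ψ f s :=
  (mul_nonneg (abs_nonneg _) (hψ0 _)).trans (le_profile hψ0 hψbdd hf s ⟨0, by simp⟩)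

theorem profile_pos (hψpos : ∀ s, 0 < ψ s) (hψbdd : BddAbove (Set.range ψ))
    (hf : ∀ t, |f t| ≤ B) {t : Set.Icc (0:ℝ) 1} (ht : f t ≠ 0) (s : ℝ) :
    0 < profile β ψ f s :=
  (mul_pos (abs_pos.2 ht) (hψpos _)).trans_le
    (le_profile (fun s => (hψpos s).le) hψbdd hf s t)

theorem profile_zero : profile β ψ 0 = 0 := by
  ext s
  simp [profile]

theorem profile_smul (lam : ℝ) (s : ℝ) : profile β ψ (lam • f) s = |lam| * profile β ψ f s := by
  simp only [profile, Real.mul_iSup_of_nonneg (abs_nonneg lam), Pi.smul_apply, smul_eq_mul,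
    abs_mul, mul_assoc]

theorem profile_add_le (hψ0 : ∀ s, 0 ≤ ψ s) (hψbdd : BddAbove (Set.range ψ)) (hf : ∀ t, |f t| ≤ B)
    (hg : ∀ t, |g t| ≤ C) (s : ℝ) :
    profile β ψ (f + g) s ≤ profile β ψ f s + profile β ψ g s := by
  refine ciSup_le fun t => ?_
  calc |(f + g) t| * ψ (s - β * (t : ℝ))
      ≤ |f t| * ψ (s - β * (t : ℝ)) + |g t| * ψ (s - β * (t : ℝ)) := by
        rw [← add_mul]
        exact mul_le_mul_of_nonneg_right (abs_add_le _ _) (hψ0 _)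
    _ ≤ profile β ψ f s + profile β ψ g s :=
        add_le_add (le_profile hψ0 hψbdd hf s t) (le_profile hψ0 hψbdd hg s t)

theorem integrable_profile (hβ : 0 ≤ β) (hψcont : Continuous ψ) (hψ0 : ∀ s, 0 ≤ ψ s)
    (hψ : Function.Even ψ) (hanti : AntitoneOn ψ (Set.Ici 0)) (hψint : Integrable ψ)
    (hf : ∀ t, |f t| ≤ B) : Integrable (profile β ψ f) := by
  have hψbdd := hψ.bddAbove_range hanti
  have hB : 0 ≤ B := (abs_nonneg _).trans (hf ⟨0, by simp⟩)
  have hlsc : LowerSemicontinuous (profile β ψ f) :=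
    lowerSemicontinuous_ciSup (bddAbove_range hψ0 hψbdd hf) fun t =>
      (continuous_const.mul (hψcont.comp (continuous_sub_right _))).lowerSemicontinuous
  refine ((integrable_translateEnvelope hψint β).const_mul B).mono'
    hlsc.measurable.aestronglyMeasurable (Filter.Eventually.of_forall fun s => ?_)
  rw [Real.norm_of_nonneg (profile_nonneg hψ0 hψbdd hf s)]
  refine ciSup_le fun t => mul_le_mul (hf t) ?_ (hψ0 _) hB
  exact hψ.apply_sub_le_translateEnvelope hanti hψ0
    ⟨mul_nonneg hβ t.2.1, mul_le_of_le_one_right hβ t.2.2⟩ s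

theorem eq_zero_iff (hψpos : ∀ s, 0 < ψ s) (hψbdd : BddAbove (Set.range ψ))
    (hf : ∀ t, |f t| ≤ B) (hint : Integrable (profile β ψ f)) : Dnorm β ψ f = 0 ↔ f = 0 := by
  refine ⟨fun h => ?_, fun h => by simp [h, Dnorm]⟩
  by_contra hne
  obtain ⟨t, ht⟩ := Function.ne_iff.mp hne
  have hsupp : Function.support (profile β ψ f) = Set.univ :=
    Set.eq_univ_of_forall fun s => (profile_pos hψpos hψbdd hf ht s).ne'
  have hpos : 0 < Dnorm β ψ f :=
    (integral_pos_iff_support_of_nonneg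
      (profile_nonneg (fun s => (hψpos s).le) hψbdd hf) hint).2 (by simp [hsupp])
  exact hpos.ne' h

theorem smul (lam : ℝ) : Dnorm β ψ (lam • f) = |lam| * Dnorm β ψ f := by
  simp only [Dnorm, ← profile.eq_def, funext (profile_smul lam), integral_const_mul]

theorem add_le (hψ0 : ∀ s, 0 ≤ ψ s) (hψbdd : BddAbove (Set.range ψ)) (hf : ∀ t, |f t| ≤ B)
    (hg : ∀ t, |g t| ≤ C) (hfint : Integrable (profile β ψ f))
    (hgint : Integrable (profile β ψ g)) : Dnorm β ψ (f + g) ≤ Dnorm β ψ f + Dnorm β ψ g := by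
  have hfg : ∀ t, |(f + g) t| ≤ B + C := fun t => (abs_add_le _ _).trans (add_le_add (hf t) (hg t))
  calc Dnorm β ψ (f + g) ≤ ∫ s, (profile β ψ f s + profile β ψ g s) :=
        integral_mono_of_nonneg (Filter.Eventually.of_forall (profile_nonneg hψ0 hψbdd hfg))
          (hfint.add hgint) (Filter.Eventually.of_forall (profile_add_le hψ0 hψbdd hf hg))
    _ = Dnorm β ψ f + Dnorm β ψ g := integral_add hfint hgint

end Dnorm

theorem stmt7_general
    (β : ℝ) (hβ : 0 < β)
    (ψ : ℝ → ℝ) (hψcont : Continuous ψ) (hψpos : ∀ s, 0 < ψ s)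
    (hψsymm : ∀ s, ψ (-s) = ψ s) (hψanti : AntitoneOn ψ (Set.Ici 0))
    (hψint : Integrable ψ) :
    (∀ f : Set.Icc (0:ℝ) 1 → ℝ, MemE f →
      Integrable (fun s => ⨆ t : Set.Icc (0:ℝ) 1, |f t| * ψ (s - β * (t : ℝ))))
    ∧ (∀ f : Set.Icc (0:ℝ) 1 → ℝ, MemE f → (Dnorm β ψ f = 0 ↔ f = 0))
    ∧ (∀ f : Set.Icc (0:ℝ) 1 → ℝ, MemE f → ∀ lam : ℝ,
        Dnorm β ψ (lam • f) = |lam| * Dnorm β ψ f)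
    ∧ (∀ f g : Set.Icc (0:ℝ) 1 → ℝ, MemE f → MemE g →
        Dnorm β ψ (f + g) ≤ Dnorm β ψ f + Dnorm β ψ g) := by
  have hψ0 : ∀ s, 0 ≤ ψ s := fun s => (hψpos s).le
  have hψbdd : BddAbove (Set.range ψ) := Function.Even.bddAbove_range hψsymm hψanti
  have hint : ∀ f B, (∀ t, |f t| ≤ B) → Integrable (Dnorm.profile β ψ f) := fun _ _ hf =>
    Dnorm.integrable_profile hβ.le hψcont hψ0 hψsymm hψanti hψint hf
  refine ⟨fun f ⟨⟨_, hf⟩, _⟩ => hint f _ hf,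
    fun f ⟨⟨_, hf⟩, _⟩ => Dnorm.eq_zero_iff hψpos hψbdd hf (hint f _ hf),
    fun _ _ lam => Dnorm.smul lam,
    fun f g ⟨⟨_, hf⟩, _⟩ ⟨⟨_, hg⟩, _⟩ => Dnorm.add_le hψ0 hψbdd hf hg (hint f _ hf) (hint g _ hg)⟩

/-- `f ↦ ∫ sup_{t∈[0,1]}(|f(t)|ψ(s-βt)) ds` is a norm on the space of
bounded functions on `[0,1]` with at most finitely many discontinuities. -/
theorem stmt7
    (β : ℝ) (hβ : 0 < β)
    (ψ : ℝ → ℝ) (hψcont : Continuous ψ) (hψpos : ∀ s, 0 < ψ s)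
    (hψsymm : ∀ s, ψ (-s) = ψ s) (hψanti : AntitoneOn ψ (Set.Ici 0))
    (hψint : Integrable ψ) (hψprob : ∫ s, ψ s = 1) :
    (∀ f : Set.Icc (0:ℝ) 1 → ℝ, MemE f →
      Integrable (fun s => ⨆ t : Set.Icc (0:ℝ) 1, |f t| * ψ (s - β * (t : ℝ))))
    ∧ (∀ f : Set.Icc (0:ℝ) 1 → ℝ, MemE f → (Dnorm β ψ f = 0 ↔ f = 0))
    ∧ (∀ f : Set.Icc (0:ℝ) 1 → ℝ, MemE f → ∀ lam : ℝ,
        Dnorm β ψ (lam • f) = |lam| * Dnorm β ψ f)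
    ∧ (∀ f g : Set.Icc (0:ℝ) 1 → ℝ, MemE f → MemE g →
        Dnorm β ψ (f + g) ≤ Dnorm β ψ f + Dnorm β ψ g) :=
  stmt7_general β hβ ψ hψcont hψpos hψsymm hψanti hψint
end

section
/- Let (Ω, 𝔄, P) be a probability space carrying a measurable stochastic process Z = (Z_t)_{t∈[0,1]} with continuous sample paths, 0 ≤ Z_t ≤ m pointwise for some constant m ≥ 1, and E[Z_t] = 1 for every t ∈ [0,1], and a random variable U uniformly distributed on (0,1) and independent of Z. Fix M < 0 and define V_t = max(−U/Z_t, M) for t ∈ [0,1] (with V_t = M when Z_t = 0). Then for every bounded f : [0,1] → (−∞,0] with at most finitely many discontinuities and sup_{t∈[0,1]}|f(t)| ≤ min(|M|, 1/m), P(V_t ≤ f(t) for all t ∈ [0,1]) = 1 − E[sup_{t∈[0,1]}(|f(t)| Z_t)]. -/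
open MeasureTheory ProbabilityTheory Filter Topology Set

/-! The event `{V ≤ f}` is, up to the null set `{U ∉ (0,1)}`, the event `{S ≤ U}` with
`S = sup_t |f(t)| Z_t ∈ [0,1]`, since `max(-U/Z_t, M) ≤ f(t)` reduces to `|f(t)| Z_t ≤ U` once
`M ≤ f(t) ≤ 0`. As `U` is uniform and independent of `S`, `P(S ≤ U) = E[1 - S]`. The
supremum is a random variable because it may be taken over a countable dense set of times
containing the discontinuities of `f`. -/

theorem ciSup_eq_ciSup_subtype_of_dense {X α : Type*} [TopologicalSpace X] [Nonempty X]
    [ConditionallyCompleteLattice α] [TopologicalSpace α] [ClosedIicTopology α]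
    {T : Set X} (hT : Dense T) {g : X → α} (hg : BddAbove (range g))
    (hcont : ∀ x ∉ T, ContinuousAt g x) :
    ⨆ x, g x = ⨆ x : T, g x := by
  have : Nonempty T := hT.nonempty.to_subtype
  have hgT : BddAbove (range fun x : T => g x) := hg.mono (range_comp_subset_range _ _)
  refine le_antisymm (ciSup_le fun x => ?_) (ciSup_le fun x => le_ciSup hg x)
  have hx : g x ∈ closure (g '' T) := by
    by_cases hxT : x ∈ T
    · exact subset_closure (mem_image_of_mem g hxT)
    · exact mem_closure_image (hcont x hxT) (hT x)
  refine closure_minimal ?_ isClosed_Iic hx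
  rintro _ ⟨y, hy, rfl⟩
  exact le_ciSup hgT ⟨y, hy⟩

theorem exists_measurable_ciSup_mul_eq {Ω X : Type*} [MeasurableSpace Ω] [TopologicalSpace X]
    [TopologicalSpace.SeparableSpace X] [Nonempty X] {w : X → ℝ}
    (hw : {x | ¬ ContinuousAt w x}.Countable) {Z : Ω → X → ℝ}
    (hZm : ∀ x, Measurable fun ω => Z ω x) (hZc : ∀ ω, Continuous (Z ω))
    (hbdd : ∀ ω, BddAbove (range fun x => w x * Z ω x)) :
    ∃ φ : (X → ℝ) → ℝ, Measurable φ ∧ Measurable (fun ω => φ (Z ω)) ∧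
      ∀ ω, ⨆ x, w x * Z ω x = φ (Z ω) := by
  obtain ⟨Q, hQc, hQd⟩ := TopologicalSpace.exists_countable_dense X
  set T := Q ∪ {x | ¬ ContinuousAt w x}
  have : Countable T := (hQc.union hw).to_subtype
  have hφ : Measurable fun z : X → ℝ => ⨆ x : T, w x * z x :=
    Measurable.iSup fun x => (measurable_pi_apply _).const_mul _
  refine ⟨_, hφ, hφ.comp (measurable_pi_lambda _ hZm), fun ω => ?_⟩
  exact ciSup_eq_ciSup_subtype_of_dense (hQd.mono subset_union_left) (hbdd ω) fun x hx =>
    (not_not.1 fun h => hx (Or.inr h)).mul (hZc ω).continuousAt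

theorem ae_mem_of_map_eq_restrict {Ω α : Type*} [MeasurableSpace Ω] [MeasurableSpace α]
    {P : Measure Ω} {μ : Measure α} {U : Ω → α} (hU : AEMeasurable U P) {s : Set α}
    (hs : MeasurableSet s) (h : P.map U = μ.restrict s) : ∀ᵐ ω ∂P, U ω ∈ s :=
  ae_of_ae_map hU (h ▸ ae_restrict_mem hs)

theorem mul_mem_Icc_zero_one_of_le_one_div {a z m : ℝ} (ha : 0 ≤ a) (ham : a ≤ 1 / m)
    (hz : z ∈ Icc 0 m) : a * z ∈ Icc (0:ℝ) 1 :=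
  ⟨mul_nonneg ha hz.1, calc a * z ≤ 1 / m * m := mul_le_mul ham hz.2 hz.1 (ha.trans ham)
    _ ≤ 1 := by rw [one_div]; exact inv_mul_le_one⟩

theorem volume_restrict_Ioo_zero_one_Ici (s : ℝ) :
    volume.restrict (Ioo (0:ℝ) 1) (Ici s) = ENNReal.ofReal (1 - max s 0) := by
  rw [Measure.restrict_congr_set Ioo_ae_eq_Icc, Measure.restrict_apply measurableSet_Ici,
    ← Ici_inter_Iic, ← inter_assoc, Ici_inter_Ici, Ici_inter_Iic, Real.volume_Icc]

theorem ProbabilityTheory.IndepFun.measure_le_uniform_eq_one_sub_integral {Ω : Type*}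
    [MeasurableSpace Ω] {P : Measure Ω} [IsProbabilityMeasure P] {S U : Ω → ℝ}
    (hS : Measurable S) (hU : Measurable U) (hSU : IndepFun S U P)
    (hUunif : P.map U = volume.restrict (Ioo (0:ℝ) 1))
    (hS01 : ∀ᵐ ω ∂P, S ω ∈ Icc (0:ℝ) 1) :
    P {ω | S ω ≤ U ω} = ENNReal.ofReal (1 - ∫ ω, S ω ∂P) := by
  have hle : MeasurableSet {p : ℝ × ℝ | p.1 ≤ p.2} :=
    measurableSet_le measurable_fst measurable_snd
  have hSint : Integrable S P :=
    Integrable.of_bound hS.aestronglyMeasurable 1 <| hS01.mono fun ω hω => by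
      rw [Real.norm_eq_abs, abs_of_nonneg hω.1]; exact hω.2
  calc P {ω | S ω ≤ U ω} = (P.map fun ω => (S ω, U ω)) {p | p.1 ≤ p.2} :=
        (Measure.map_apply (hS.prodMk hU) hle).symm
    _ = ((P.map S).prod (P.map U)) {p | p.1 ≤ p.2} := by
        rw [(indepFun_iff_map_prod_eq_prod_map_map hS.aemeasurable hU.aemeasurable).1 hSU]
    _ = ∫⁻ s, ENNReal.ofReal (1 - max s 0) ∂(P.map S) := by
        rw [Measure.prod_apply hle, hUunif]
        exact lintegral_congr fun s => volume_restrict_Ioo_zero_one_Ici s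
    _ = ∫⁻ ω, ENNReal.ofReal (1 - S ω) ∂P := by
        rw [lintegral_map (by fun_prop) hS]
        exact lintegral_congr_ae <| hS01.mono fun ω hω => by dsimp only; rw [max_eq_left hω.1]
    _ = ENNReal.ofReal (1 - ∫ ω, S ω ∂P) := by
        rw [← ofReal_integral_eq_lintegral_ofReal (f := fun ω => 1 - S ω)
          ((integrable_const 1).sub hSint)
          (hS01.mono fun ω hω => sub_nonneg.2 hω.2), integral_sub (integrable_const 1) hSint,
          integral_const, probReal_univ, one_smul]

theorem ite_max_neg_div_le_iff {M x z u : ℝ} (hMx : M ≤ x) (hx : x ≤ 0) (hz : 0 ≤ z)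
    (hu : 0 ≤ u) : (if z = 0 then M else max (-u / z) M) ≤ x ↔ |x| * z ≤ u := by
  rw [abs_of_nonpos hx]
  split_ifs with hz0
  · simp [hz0, hMx, hu]
  · rw [max_le_iff, div_le_iff₀ (lt_of_le_of_ne hz (Ne.symm hz0))]
    constructor
    · rintro ⟨h, -⟩; linarith
    · intro h; exact ⟨by linarith, hMx⟩

theorem stmt11_general
    {Ω : Type*} [MeasurableSpace Ω] (P : Measure Ω) [IsProbabilityMeasure P]
    (Z : Ω → Set.Icc (0:ℝ) 1 → ℝ) (m : ℝ)
    (hZmeas : ∀ t, Measurable fun ω => Z ω t)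
    (hZcont : ∀ ω, Continuous (Z ω))
    (hZbd : ∀ ω t, Z ω t ∈ Set.Icc (0:ℝ) m)
    (U : Ω → ℝ) (hUmeas : Measurable U)
    (hUunif : Measure.map U P = volume.restrict (Set.Ioo (0:ℝ) 1))
    (hindep : IndepFun U Z P)
    (M : ℝ) (hM : M < 0)
    (V : Ω → Set.Icc (0:ℝ) 1 → ℝ)
    (hV : ∀ ω t, V ω t = if Z ω t = 0 then M else max (-(U ω) / Z ω t) M)
    (f : Set.Icc (0:ℝ) 1 → ℝ)
    (hfbd : ∃ B, ∀ t, |f t| ≤ B)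
    (hfnonpos : ∀ t, f t ≤ 0)
    (hfdisc : {t | ¬ ContinuousAt f t}.Finite)
    (hfsup : (⨆ t, |f t|) ≤ min |M| (1 / m)) :
    P {ω | ∀ t, V ω t ≤ f t}
      = ENNReal.ofReal (1 - ∫ ω, (⨆ t, |f t| * Z ω t) ∂P) := by
  have : Nonempty (Icc (0:ℝ) 1) := ⟨⟨0, left_mem_Icc.2 zero_le_one⟩⟩
  obtain ⟨B, hB⟩ := hfbd
  have hfle t : |f t| ≤ min |M| (1 / m) :=
    (le_ciSup ⟨B, forall_mem_range.2 hB⟩ t).trans hfsup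
  have hterm ω t : |f t| * Z ω t ∈ Icc (0:ℝ) 1 :=
    mul_mem_Icc_zero_one_of_le_one_div (abs_nonneg _) ((hfle t).trans (min_le_right _ _))
      (hZbd ω t)
  have hbdd ω : BddAbove (range fun t => |f t| * Z ω t) :=
    ⟨1, forall_mem_range.2 fun t => (hterm ω t).2⟩
  obtain ⟨φ, hφ, hS, hsup⟩ := exists_measurable_ciSup_mul_eq
    (hfdisc.countable.mono fun t ht (h : ContinuousAt f t) => ht h.abs) hZmeas hZcont hbdd
  have hS01 ω : φ (Z ω) ∈ Icc (0:ℝ) 1 := by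
    rw [← hsup]
    exact ⟨(hterm ω _).1.trans (le_ciSup (hbdd ω) (Classical.arbitrary _)),
      ciSup_le fun t => (hterm ω t).2⟩
  have hevent : {ω | ∀ t, V ω t ≤ f t} =ᵐ[P] {ω | φ (Z ω) ≤ U ω} := by
    refine eventuallyEq_set.2 <|
      (ae_mem_of_map_eq_restrict hUmeas.aemeasurable measurableSet_Ioo hUunif).mono fun ω hω => ?_
    have hMf t : M ≤ f t := by
      linarith [abs_of_neg hM, abs_of_nonpos (hfnonpos t), (hfle t).trans (min_le_left _ _)]
    simp only [mem_ofPred_eq, hV, ← hsup, ciSup_le_iff (hbdd ω),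
      ite_max_neg_div_le_iff (hMf _) (hfnonpos _) (hZbd ω _).1 hω.1.le]
  have hindep' : IndepFun (fun ω => φ (Z ω)) U P := (hindep.comp measurable_id hφ).symm
  rw [measure_congr hevent,
    hindep'.measure_le_uniform_eq_one_sub_integral hS hUmeas hUunif (ae_of_all _ hS01)]
  simp only [hsup]

/-- the process `V = max(-U/Z, M)` generated by a generator `Z` and an
independent uniform rv `U` is a standard generalized Pareto process:
`P(V ≤ f) = 1 - E[sup_t(|f(t)| Z_t)]` for `‖f‖∞ ≤ min(|M|, 1/m)`. -/
theorem stmt11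
    {Ω : Type*} [MeasurableSpace Ω] (P : Measure Ω) [IsProbabilityMeasure P]
    (Z : Ω → Set.Icc (0:ℝ) 1 → ℝ) (m : ℝ) (hm : 1 ≤ m)
    (hZmeas : ∀ t, Measurable fun ω => Z ω t)
    (hZcont : ∀ ω, Continuous (Z ω))
    (hZbd : ∀ ω t, Z ω t ∈ Set.Icc (0:ℝ) m)
    (hZmean : ∀ t, ∫ ω, Z ω t ∂P = 1)
    (U : Ω → ℝ) (hUmeas : Measurable U)
    (hUunif : Measure.map U P = volume.restrict (Set.Ioo (0:ℝ) 1))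
    (hindep : IndepFun U Z P)
    (M : ℝ) (hM : M < 0)
    (V : Ω → Set.Icc (0:ℝ) 1 → ℝ)
    (hV : ∀ ω t, V ω t = if Z ω t = 0 then M else max (-(U ω) / Z ω t) M)
    (f : Set.Icc (0:ℝ) 1 → ℝ)
    (hfbd : ∃ B, ∀ t, |f t| ≤ B)
    (hfnonpos : ∀ t, f t ≤ 0)
    (hfdisc : {t | ¬ ContinuousAt f t}.Finite)
    (hfsup : (⨆ t, |f t|) ≤ min |M| (1 / m)) :
    P {ω | ∀ t, V ω t ≤ f t}
      = ENNReal.ofReal (1 - ∫ ω, (⨆ t, |f t| * Z ω t) ∂P) :=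
  stmt11_general P Z m hZmeas hZcont hZbd U hUmeas hUunif hindep M hM V hV f hfbd hfnonpos hfdisc
    hfsup
end

section
/- Let (Ω, 𝔄, P) be a probability space carrying a measurable stochastic process Z = (Z_t)_{t∈[0,1]} with continuous sample paths, 0 ≤ Z_t ≤ m pointwise for some constant m ≥ 1, and E[Z_t] = 1 for every t ∈ [0,1], and a random variable U uniformly distributed on (0,1) and independent of Z. Fix M < 0 and define V_t = max(−U/Z_t, M) for t ∈ [0,1] (with V_t = M when Z_t = 0). Then for every bounded f : [0,1] → (−∞,0] with at most finitely many discontinuities and sup_{t∈[0,1]}|f(t)| ≤ min(|M|, 1/m), P(V_t > f(t) for all t ∈ [0,1]) = E[inf_{t∈[0,1]}(|f(t)| Z_t)]. -/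
/-!
Write `g = inf_t |f t| Z_t`. Since `M ≤ f ≤ 0`, pointwise `V_t > f t` means `U < |f t| Z_t` up to
the boundary case `U = |f t| Z_t`, so `{0 < U < g} ⊆ {V > f} ⊆ {U ≤ g}`. The bound `‖f‖∞ ≤ 1/m`
puts `g` in `[0, 1]`, and for `U` uniform on `(0, 1)` and independent of `g` both outer events have
probability `E[g]` by Fubini. The infimum runs over uncountably many `t`, but it equals the infimum
over a countable dense set enlarged by the discontinuities of `f`; this makes `g` a measurable
function of the path `Z`, hence independent of `U`.
-/

open MeasureTheory ProbabilityTheory Filter Topology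

section CountableInf

variable {X α : Type*} [TopologicalSpace X]

theorem ciInf_eq_ciInf_subtype_of_dense [ConditionallyCompleteLinearOrder α] [TopologicalSpace α]
    [OrderClosedTopology α] {h : X → α} {D : Set X} [Nonempty D] (hD : Dense D)
    (hcont : ∀ x ∉ D, ContinuousAt h x) (hbdd : BddBelow (Set.range h)) :
    ⨅ x, h x = ⨅ x : D, h x := by
  have hbddD : BddBelow (Set.range fun x : D => h x) :=
    hbdd.mono (Set.range_comp_subset_range _ _)
  have : Nonempty X := ⟨(Classical.arbitrary D).1⟩
  refine le_antisymm (le_ciInf fun x => ciInf_le hbdd x) (le_ciInf fun x => ?_)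
  by_cases hx : x ∈ D
  · exact ciInf_le hbddD ⟨x, hx⟩
  · have : (𝓝[D] x).NeBot := mem_closure_iff_nhdsWithin_neBot.mp (hD x)
    exact ge_of_tendsto ((hcont x hx).tendsto.mono_left nhdsWithin_le_nhds)
      (eventually_nhdsWithin_of_forall fun y hy => ciInf_le hbddD ⟨y, hy⟩)

theorem exists_measurable_iInf_mul_eq_comp [TopologicalSpace.SeparableSpace X] [Nonempty X]
    {Ω : Type*} {Z : Ω → X → ℝ} (hZcont : ∀ ω, Continuous (Z ω)) (hZ : ∀ ω x, 0 ≤ Z ω x)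
    {w : X → ℝ} (hw : ∀ x, 0 ≤ w x) (hwdisc : {x | ¬ContinuousAt w x}.Countable) :
    ∃ G : (X → ℝ) → ℝ, Measurable G ∧ (fun ω => ⨅ x, w x * Z ω x) = G ∘ Z := by
  obtain ⟨T, hTc, hTd⟩ := TopologicalSpace.exists_countable_dense X
  set D := T ∪ {x | ¬ContinuousAt w x}
  have : Countable D := (hTc.union hwdisc).to_subtype
  have : Nonempty D := (hTd.nonempty.mono Set.subset_union_left).to_subtype
  refine ⟨fun φ => ⨅ x : D, w x * φ x,
    Measurable.iInf fun x => (measurable_pi_apply _).const_mul _, funext fun ω => ?_⟩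
  refine ciInf_eq_ciInf_subtype_of_dense (hTd.mono Set.subset_union_left) (fun x hx => ?_)
    ⟨0, Set.forall_mem_range.2 fun x => mul_nonneg (hw x) (hZ ω x)⟩
  have hwx : ContinuousAt w x := not_not.mp fun h => hx (Or.inr h)
  exact hwx.mul (hZcont ω).continuousAt

end CountableInf

theorem ciInf_mul_mem_Icc {X : Type*} [Nonempty X] {w z : X → ℝ} {m : ℝ} (hm : 0 < m)
    (hw : ∀ x, w x ∈ Set.Icc 0 (1 / m)) (hz : ∀ x, z x ∈ Set.Icc 0 m) :
    ⨅ x, w x * z x ∈ Set.Icc (0:ℝ) 1 := by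
  have hwz : ∀ x, 0 ≤ w x * z x := fun x => mul_nonneg (hw x).1 (hz x).1
  refine ⟨le_ciInf hwz, ?_⟩
  obtain ⟨x₀⟩ := ‹Nonempty X›
  calc ⨅ x, w x * z x ≤ w x₀ * z x₀ := ciInf_le ⟨0, Set.forall_mem_range.2 hwz⟩ x₀
    _ ≤ 1 / m * m := mul_le_mul (hw x₀).2 (hz x₀).2 (hz x₀).1 (by positivity)
    _ = 1 := one_div_mul_cancel hm.ne'

theorem volume_restrict_Ioo_apply_of_Ioo_subset_of_subset_Iic {c : ℝ} (hc : c ≤ 1)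
    {A : Set ℝ} (hA : MeasurableSet A) (hIooA : Set.Ioo 0 c ⊆ A) (hAIic : A ⊆ Set.Iic c) :
    volume.restrict (Set.Ioo (0:ℝ) 1) A = ENNReal.ofReal c := by
  rw [Measure.restrict_apply hA]
  refine le_antisymm ?_ ?_
  · calc volume (A ∩ Set.Ioo 0 1) ≤ volume (Set.Icc (0:ℝ) c) :=
          measure_mono fun u hu => ⟨hu.2.1.le, hAIic hu.1⟩
      _ = ENNReal.ofReal c := by simp [Real.volume_Icc]
  · calc ENNReal.ofReal c = volume (Set.Ioo (0:ℝ) c) := by simp [Real.volume_Ioo]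
      _ ≤ volume (A ∩ Set.Ioo 0 1) :=
          measure_mono fun u hu => ⟨hIooA hu, hu.1, hu.2.trans_le hc⟩

section Uniform

variable {Ω : Type*} [MeasurableSpace Ω] {P : Measure Ω} [IsProbabilityMeasure P] {U g : Ω → ℝ}

theorem measure_preimage_prodMk_eq_ofReal_integral (hU : Measurable U)
    (hUunif : P.map U = volume.restrict (Set.Ioo 0 1)) (hg : Measurable g)
    (hg01 : ∀ ω, g ω ∈ Set.Icc (0:ℝ) 1) (hind : IndepFun U g P) {s : Set (ℝ × ℝ)}
    (hs : MeasurableSet s)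
    (hslice : ∀ c ∈ Set.Icc (0:ℝ) 1,
      volume.restrict (Set.Ioo 0 1) ((fun u => (u, c)) ⁻¹' s) = ENNReal.ofReal c) :
    P ((fun ω => (U ω, g ω)) ⁻¹' s) = ENNReal.ofReal (∫ ω, g ω ∂P) := by
  have hgint : Integrable g P :=
    (integrable_const (1:ℝ)).mono' hg.aestronglyMeasurable
      (Eventually.of_forall fun ω => by
        rw [Real.norm_eq_abs, abs_of_nonneg (hg01 ω).1]; exact (hg01 ω).2)
  have hlaw : P.map (fun ω => (U ω, g ω)) = (P.map U).prod (P.map g) :=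
    (indepFun_iff_map_prod_eq_prod_map_map hU.aemeasurable hg.aemeasurable).mp hind
  have hg01_ae : ∀ᵐ c ∂P.map g, c ∈ Set.Icc (0:ℝ) 1 :=
    (ae_map_iff hg.aemeasurable measurableSet_Icc).mpr (Eventually.of_forall hg01)
  rw [← Measure.map_apply (hU.prodMk hg) hs, hlaw, Measure.prod_apply_symm hs, hUunif]
  calc ∫⁻ c, volume.restrict (Set.Ioo 0 1) ((fun u => (u, c)) ⁻¹' s) ∂P.map g
      = ∫⁻ c, ENNReal.ofReal c ∂P.map g := lintegral_congr_ae (hg01_ae.mono hslice)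
    _ = ∫⁻ ω, ENNReal.ofReal (g ω) ∂P := lintegral_map ENNReal.measurable_ofReal hg
    _ = ENNReal.ofReal (∫ ω, g ω ∂P) :=
      (ofReal_integral_eq_lintegral_ofReal hgint (Eventually.of_forall fun ω => (hg01 ω).1)).symm

theorem measure_lt_eq_ofReal_integral (hU : Measurable U)
    (hUunif : P.map U = volume.restrict (Set.Ioo 0 1)) (hg : Measurable g)
    (hg01 : ∀ ω, g ω ∈ Set.Icc (0:ℝ) 1) (hind : IndepFun U g P) :
    P {ω | U ω < g ω} = ENNReal.ofReal (∫ ω, g ω ∂P) :=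
  measure_preimage_prodMk_eq_ofReal_integral hU hUunif hg hg01 hind
    (measurableSet_lt measurable_fst measurable_snd) fun _ hc =>
      volume_restrict_Ioo_apply_of_Ioo_subset_of_subset_Iic hc.2 measurableSet_Iio
        Set.Ioo_subset_Iio_self Set.Iio_subset_Iic_self

theorem measure_le_eq_ofReal_integral (hU : Measurable U)
    (hUunif : P.map U = volume.restrict (Set.Ioo 0 1)) (hg : Measurable g)
    (hg01 : ∀ ω, g ω ∈ Set.Icc (0:ℝ) 1) (hind : IndepFun U g P) :
    P {ω | U ω ≤ g ω} = ENNReal.ofReal (∫ ω, g ω ∂P) :=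
  measure_preimage_prodMk_eq_ofReal_integral hU hUunif hg hg01 hind
    (measurableSet_le measurable_fst measurable_snd) fun _ hc =>
      volume_restrict_Ioo_apply_of_Ioo_subset_of_subset_Iic hc.2 measurableSet_Iic
        (Set.Ioo_subset_Iio_self.trans Set.Iio_subset_Iic_self) subset_rfl

end Uniform

theorem le_abs_mul_of_lt_ite_max {a u z M : ℝ} (hz : 0 ≤ z) (hMa : M ≤ a) (ha : a ≤ 0)
    (h : a < if z = 0 then M else max (-u / z) M) : u ≤ |a| * z := by
  rcases hz.eq_or_lt with rfl | hz
  · simp only [if_pos] at h; linarith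
  · rw [if_neg hz.ne', lt_max_iff, lt_div_iff₀ hz] at h
    rw [abs_of_nonpos ha]
    rcases h with h | h <;> linarith

theorem lt_ite_max_of_lt_abs_mul {a u z M : ℝ} (ha : a ≤ 0) (hu : 0 < u) (h : u < |a| * z) :
    a < if z = 0 then M else max (-u / z) M := by
  have hz : 0 < z := pos_of_mul_pos_right (hu.trans h) (abs_nonneg a)
  rw [abs_of_nonpos ha] at h
  rw [if_neg hz.ne', lt_max_iff, lt_div_iff₀ hz]
  exact Or.inl (by linarith)

theorem stmt12_general
    {Ω : Type*} [MeasurableSpace Ω] (P : Measure Ω) [IsProbabilityMeasure P]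
    (Z : Ω → Set.Icc (0:ℝ) 1 → ℝ) (m : ℝ) (hm : 1 ≤ m)
    (hZmeas : ∀ t, Measurable fun ω => Z ω t)
    (hZcont : ∀ ω, Continuous (Z ω))
    (hZbd : ∀ ω t, Z ω t ∈ Set.Icc (0:ℝ) m)
    (U : Ω → ℝ) (hUmeas : Measurable U)
    (hUunif : Measure.map U P = volume.restrict (Set.Ioo (0:ℝ) 1))
    (hindep : IndepFun U Z P)
    (M : ℝ) (hM : M < 0)
    (V : Ω → Set.Icc (0:ℝ) 1 → ℝ)
    (hV : ∀ ω t, V ω t = if Z ω t = 0 then M else max (-(U ω) / Z ω t) M)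
    (f : Set.Icc (0:ℝ) 1 → ℝ)
    (hfbd : ∃ B, ∀ t, |f t| ≤ B)
    (hfnonpos : ∀ t, f t ≤ 0)
    (hfdisc : {t | ¬ ContinuousAt f t}.Finite)
    (hfsup : (⨆ t, |f t|) ≤ min |M| (1 / m)) :
    P {ω | ∀ t, f t < V ω t}
      = ENNReal.ofReal (∫ ω, (⨅ t, |f t| * Z ω t) ∂P) := by
  obtain ⟨B, hB⟩ := hfbd
  have hf_le : ∀ t, |f t| ≤ |M| ∧ |f t| ≤ 1 / m := fun t =>
    le_min_iff.mp ((le_ciSup ⟨B, Set.forall_mem_range.2 hB⟩ t).trans hfsup)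
  have hMf : ∀ t, M ≤ f t := fun t => by
    linarith [neg_abs_le (f t), (hf_le t).1, abs_of_neg hM]
  have hbdd : ∀ ω, BddBelow (Set.range fun t => |f t| * Z ω t) := fun ω =>
    ⟨0, Set.forall_mem_range.2 fun t => mul_nonneg (abs_nonneg _) (hZbd ω t).1⟩
  obtain ⟨G, hG, hgG⟩ := exists_measurable_iInf_mul_eq_comp hZcont (fun ω t => (hZbd ω t).1)
    (fun t => abs_nonneg (f t)) (hfdisc.countable.mono fun _ => mt ContinuousAt.abs)
  set g : Ω → ℝ := fun ω => ⨅ t, |f t| * Z ω t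
  have hg : Measurable g := hgG ▸ hG.comp (measurable_pi_iff.mpr hZmeas)
  have hind : IndepFun U g P := hgG ▸ hindep.comp measurable_id hG
  have hg01 : ∀ ω, g ω ∈ Set.Icc (0:ℝ) 1 := fun ω =>
    ciInf_mul_mem_Icc (by linarith) (fun t => ⟨abs_nonneg _, (hf_le t).2⟩) (hZbd ω)
  have hUpos : ∀ᵐ ω ∂P, 0 < U ω :=
    (ae_of_ae_map hUmeas.aemeasurable (hUunif ▸ ae_restrict_mem measurableSet_Ioo)).mono
      fun _ hu => hu.1
  refine le_antisymm ?_ ?_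
  · calc P {ω | ∀ t, f t < V ω t} ≤ P {ω | U ω ≤ g ω} := measure_mono fun ω hω =>
          le_ciInf fun t => le_abs_mul_of_lt_ite_max (hZbd ω t).1 (hMf t) (hfnonpos t)
            (hV ω t ▸ hω t)
      _ = _ := measure_le_eq_ofReal_integral hUmeas hUunif hg hg01 hind
  · calc ENNReal.ofReal (∫ ω, g ω ∂P) = P {ω | U ω < g ω} :=
          (measure_lt_eq_ofReal_integral hUmeas hUunif hg hg01 hind).symm
      _ ≤ P {ω | ∀ t, f t < V ω t} := measure_mono_ae <| hUpos.mono fun ω hU hlt t =>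
          hV ω t ▸ lt_ite_max_of_lt_abs_mul (hfnonpos t) hU (hlt.trans_le (ciInf_le (hbdd ω) t))

/-- the joint survival function of the process `V = max(-U/Z, M)`
generated by a generator `Z` and an independent uniform rv `U` satisfies
`P(V > f) = E[inf_t(|f(t)| Z_t)]` for `‖f‖∞ ≤ min(|M|, 1/m)`. -/
theorem stmt12
    {Ω : Type*} [MeasurableSpace Ω] (P : Measure Ω) [IsProbabilityMeasure P]
    (Z : Ω → Set.Icc (0:ℝ) 1 → ℝ) (m : ℝ) (hm : 1 ≤ m)
    (hZmeas : ∀ t, Measurable fun ω => Z ω t)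
    (hZcont : ∀ ω, Continuous (Z ω))
    (hZbd : ∀ ω t, Z ω t ∈ Set.Icc (0:ℝ) m)
    (hZmean : ∀ t, ∫ ω, Z ω t ∂P = 1)
    (U : Ω → ℝ) (hUmeas : Measurable U)
    (hUunif : Measure.map U P = volume.restrict (Set.Ioo (0:ℝ) 1))
    (hindep : IndepFun U Z P)
    (M : ℝ) (hM : M < 0)
    (V : Ω → Set.Icc (0:ℝ) 1 → ℝ)
    (hV : ∀ ω t, V ω t = if Z ω t = 0 then M else max (-(U ω) / Z ω t) M)
    (f : Set.Icc (0:ℝ) 1 → ℝ)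
    (hfbd : ∃ B, ∀ t, |f t| ≤ B)
    (hfnonpos : ∀ t, f t ≤ 0)
    (hfdisc : {t | ¬ ContinuousAt f t}.Finite)
    (hfsup : (⨆ t, |f t|) ≤ min |M| (1 / m)) :
    P {ω | ∀ t, f t < V ω t}
      = ENNReal.ofReal (∫ ω, (⨅ t, |f t| * Z ω t) ∂P) :=
  stmt12_general P Z m hm hZmeas hZcont hZbd U hUmeas hUunif hindep M hM V hV f hfbd hfnonpos hfdisc
    hfsup
end

section
/- Let (Ω, 𝔄, P) be a probability space carrying a measurable stochastic process Z = (Z_t)_{t∈[0,1]} with continuous sample paths, 0 ≤ Z_t ≤ m pointwise for some constant m ≥ 1, and E[Z_t] = 1 for every t ∈ [0,1], and a random variable Y > 0 independent of Z whose distribution function H is continuous and satisfies H(u) = u + A u^{1+δ} + o(u^{1+δ}) as u ↓ 0, for some constants A ∈ ℝ and δ > 0. Fix M < 0 and define X_t = max(−Y/Z_t, M) (with X_t = M when Z_t = 0). Then there exists ε₀ > 0 such that for every bounded f : [0,1] → (−∞,0] with at most finitely many discontinuities and sup_{t∈[0,1]}|f(t)| ≤ ε₀: lim_{c↓0} c^{−(1+δ)}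 ( P(X_t > c·f(t) for all t ∈ [0,1]) − c·E[inf_{t∈[0,1]}(|f(t)|Z_t)] − A c^{1+δ} E[(inf_{t∈[0,1]}(|f(t)|Z_t))^{1+δ}] ) = 0. -/
/-!
For small `c > 0` the event `{∀ t, c f t < X t}` is `{∀ t, Y < c |f t| Z_t}`, which lies between
`{Y < c W}` and `{Y ≤ c W}` for `W = ⨅ t, |f t| Z_t`. Since `f` has only finitely many
discontinuities, this infimum may be taken over a countable set, so `W` is a measurable functional
of the path `Z` and hence independent of `Y`. As `Y` has no atoms, the probability of the event is
`E[H(c W)]`, and expanding `H(u) = u + A u^{1+δ} + o(u^{1+δ})` uniformly on the bounded range of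
`c W` gives the claim.
-/

open MeasureTheory ProbabilityTheory Filter Topology Asymptotics

theorem ciInf_eq_ciInf_union_of_dense {α β : Type*} [TopologicalSpace α]
    [ConditionallyCompleteLinearOrder β] [TopologicalSpace β] [OrderClosedTopology β]
    {g : α → β} (hg : BddBelow (Set.range g)) {S D : Set α} (hS : Dense S)
    (hD : ∀ t ∉ D, ContinuousAt g t) :
    ⨅ t, g t = ⨅ t : ↥(S ∪ D), g t := by
  rcases isEmpty_or_nonempty α with hα | hα
  · simp [iInf, Set.range_eq_empty]
  have : Nonempty ↥(S ∪ D) := (hS.nonempty.mono Set.subset_union_left).to_subtype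
  have hg' : BddBelow (Set.range fun t : ↥(S ∪ D) => g t) :=
    hg.mono (Set.range_comp_subset_range _ _)
  refine le_antisymm (le_ciInf fun t => ciInf_le hg t) (le_ciInf fun t => ?_)
  by_cases ht : t ∈ D
  · exact ciInf_le hg' ⟨t, Or.inr ht⟩
  · have := mem_closure_iff_nhdsWithin_neBot.mp (hS t)
    exact ge_of_tendsto ((hD t ht).tendsto.mono_left nhdsWithin_le_nhds)
      (eventually_nhdsWithin_of_forall fun s hs => ciInf_le hg' ⟨s, Or.inl hs⟩)

theorem exists_measurable_ciInf_mul_eq {Ω α : Type*} [TopologicalSpace α]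
    [TopologicalSpace.SeparableSpace α] {w : α → ℝ} {Z : Ω → α → ℝ}
    (hbdd : ∀ ω, BddBelow (Set.range fun t => w t * Z ω t)) {D : Set α} (hD : D.Countable)
    (hcont : ∀ ω, ∀ t ∉ D, ContinuousAt (fun t => w t * Z ω t) t) :
    ∃ φ : (α → ℝ) → ℝ, Measurable φ ∧ ∀ ω, ⨅ t, w t * Z ω t = φ (Z ω) := by
  obtain ⟨S, hSc, hSd⟩ := TopologicalSpace.exists_countable_dense α
  have : Countable ↥(S ∪ D) := (hSc.union hD).to_subtype
  exact ⟨fun z => ⨅ t : ↥(S ∪ D), w t * z t,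
    .iInf fun t => (measurable_pi_apply _).const_mul _,
    fun ω => ciInf_eq_ciInf_union_of_dense (hbdd ω) hSd (hcont ω)⟩

theorem measurable_and_indepFun_ciInf_mul {Ω α : Type*} [MeasurableSpace Ω] {P : Measure Ω}
    [TopologicalSpace α] [TopologicalSpace.SeparableSpace α] {Y : Ω → ℝ} {Z : Ω → α → ℝ}
    (hZ : ∀ t, Measurable fun ω => Z ω t) (hind : IndepFun Y Z P) {w : α → ℝ}
    (hbdd : ∀ ω, BddBelow (Set.range fun t => w t * Z ω t)) {D : Set α} (hD : D.Countable)
    (hcont : ∀ ω, ∀ t ∉ D, ContinuousAt (fun t => w t * Z ω t) t) :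
    Measurable (fun ω => ⨅ t, w t * Z ω t) ∧ IndepFun (fun ω => ⨅ t, w t * Z ω t) Y P := by
  obtain ⟨φ, hφ, hWφ⟩ := exists_measurable_ciInf_mul_eq hbdd hD hcont
  rw [show (fun ω => ⨅ t, w t * Z ω t) = φ ∘ Z from funext hWφ]
  exact ⟨hφ.comp (measurable_pi_lambda _ hZ), (hind.comp measurable_id hφ).symm⟩

theorem measure_preimage_singleton_eq_zero_of_continuous_cdf {Ω : Type*} [MeasurableSpace Ω]
    {P : Measure Ω} [IsProbabilityMeasure P] {Y : Ω → ℝ} (hY : Measurable Y)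
    (hcdf : Continuous fun u => (P {ω | Y ω ≤ u}).toReal) (u : ℝ) :
    P (Y ⁻¹' {u}) = 0 := by
  have : IsProbabilityMeasure (P.map Y) := Measure.isProbabilityMeasure_map hY.aemeasurable
  have hcdf_eq : ⇑(cdf (P.map Y)) = fun u => (P {ω | Y ω ≤ u}).toReal := by
    ext x
    rw [cdf_eq_real, measureReal_def, Measure.map_apply hY measurableSet_Iic]
    rfl
  have hleft : Function.leftLim (cdf (P.map Y)) u = cdf (P.map Y) u :=
    ContinuousWithinAt.leftLim_eq (by rw [hcdf_eq]; exact hcdf.continuousWithinAt)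
  rw [← Measure.map_apply hY (measurableSet_singleton u), ← measure_cdf (P.map Y),
    StieltjesFunction.measure_singleton, hleft, sub_self, ENNReal.ofReal_zero]

namespace ProbabilityTheory

variable {Ω : Type*} [MeasurableSpace Ω] {P : Measure Ω} [IsFiniteMeasure P]

theorem IndepFun.measure_mem_eq_lintegral {β γ : Type*} [MeasurableSpace β]
    [MeasurableSpace γ] {W : Ω → β} {Y : Ω → γ} (hW : Measurable W) (hY : Measurable Y)
    (hind : IndepFun W Y P) {s : Set (β × γ)} (hs : MeasurableSet s) :
    P {ω | (W ω, Y ω) ∈ s} = ∫⁻ ω, P {ω' | (W ω, Y ω') ∈ s} ∂P := by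
  calc P {ω | (W ω, Y ω) ∈ s}
      = P.map (fun ω => (W ω, Y ω)) s := (Measure.map_apply (hW.prodMk hY) hs).symm
    _ = (P.map W).prod (P.map Y) s := by
        rw [(indepFun_iff_map_prod_eq_prod_map_map hW.aemeasurable hY.aemeasurable).mp hind]
    _ = ∫⁻ w, P.map Y (Prod.mk w ⁻¹' s) ∂(P.map W) := Measure.prod_apply hs
    _ = ∫⁻ ω, P.map Y (Prod.mk (W ω) ⁻¹' s) ∂P :=
        lintegral_map (measurable_measure_prodMk_left hs) hW
    _ = ∫⁻ ω, P {ω' | (W ω, Y ω') ∈ s} ∂P := by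
        congr! 2 with ω
        exact Measure.map_apply hY (measurable_prodMk_left hs)

theorem IndepFun.measure_eq_eq_zero {W Y : Ω → ℝ} (hW : Measurable W) (hY : Measurable Y)
    (hind : IndepFun W Y P) (hatom : ∀ u, P (Y ⁻¹' {u}) = 0) :
    P {ω | Y ω = W ω} = 0 := by
  calc P {ω | Y ω = W ω} = ∫⁻ ω, P (Y ⁻¹' {W ω}) ∂P :=
        hind.measure_mem_eq_lintegral hW hY (measurableSet_eq_fun measurable_snd measurable_fst)
    _ = 0 := by simp [hatom]

theorem IndepFun.measure_le_toReal_eq_integral {W Y : Ω → ℝ} (hW : Measurable W)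
    (hY : Measurable Y) (hind : IndepFun W Y P) :
    (P {ω | Y ω ≤ W ω}).toReal = ∫ ω, (P {ω' | Y ω' ≤ W ω}).toReal ∂P := by
  have hmono : Monotone fun u => P {ω | Y ω ≤ u} :=
    fun _ _ huv => measure_mono fun _ hω => le_trans hω huv
  calc (P {ω | Y ω ≤ W ω}).toReal = (∫⁻ ω, P {ω' | Y ω' ≤ W ω} ∂P).toReal :=
        congrArg _ (hind.measure_mem_eq_lintegral hW hY
          (measurableSet_le measurable_snd measurable_fst))
    _ = ∫ ω, (P {ω' | Y ω' ≤ W ω}).toReal ∂P :=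
        (integral_toReal (hmono.measurable.comp_aemeasurable hW.aemeasurable)
          (Eventually.of_forall fun _ => measure_lt_top P _)).symm

end ProbabilityTheory

theorem measure_forall_lt_eq_measure_le_ciInf {Ω ι : Type*} [MeasurableSpace Ω]
    {P : Measure Ω} [Nonempty ι] {Y : Ω → ℝ} {g : Ω → ι → ℝ}
    (hg : ∀ ω, BddBelow (Set.range (g ω))) (hnull : P {ω | Y ω = ⨅ t, g ω t} = 0) :
    P {ω | ∀ t, Y ω < g ω t} = P {ω | Y ω ≤ ⨅ t, g ω t} := by
  refine le_antisymm (measure_mono fun ω h => le_ciInf fun t => (h t).le) ?_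
  calc P {ω | Y ω ≤ ⨅ t, g ω t}
      ≤ P ({ω | Y ω < ⨅ t, g ω t} ∪ {ω | Y ω = ⨅ t, g ω t}) :=
        measure_mono fun ω (h : Y ω ≤ ⨅ t, g ω t) => lt_or_eq_of_le h
    _ ≤ P {ω | Y ω < ⨅ t, g ω t} :=
        (measure_union_le _ _).trans_eq (by rw [hnull, add_zero])
    _ ≤ P {ω | ∀ t, Y ω < g ω t} :=
        measure_mono fun ω h t => h.trans_le (ciInf_le (hg ω) t)

theorem measure_forall_lt_mul_toReal_eq_integral {Ω ι : Type*} [MeasurableSpace Ω]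
    {P : Measure Ω} [IsFiniteMeasure P] [Nonempty ι] {Y : Ω → ℝ} (hY : Measurable Y)
    (hatom : ∀ u, P (Y ⁻¹' {u}) = 0) {g : Ω → ι → ℝ} (hg : ∀ ω t, 0 ≤ g ω t)
    (hW : Measurable fun ω => ⨅ t, g ω t) (hind : IndepFun (fun ω => ⨅ t, g ω t) Y P)
    {c : ℝ} (hc : 0 ≤ c) :
    (P {ω | ∀ t, Y ω < c * g ω t}).toReal
      = ∫ ω, (P {ω' | Y ω' ≤ c * ⨅ t, g ω t}).toReal ∂P := by
  have hcW : Measurable fun ω => c * ⨅ t, g ω t := hW.const_mul c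
  have hind' : IndepFun (fun ω => c * ⨅ t, g ω t) Y P :=
    hind.comp (measurable_const_mul c) measurable_id
  have hinf : ∀ ω, ⨅ t, c * g ω t = c * ⨅ t, g ω t :=
    fun ω => (Real.mul_iInf_of_nonneg hc _).symm
  rw [measure_forall_lt_eq_measure_le_ciInf (fun ω => ⟨0, by
      rintro _ ⟨t, rfl⟩; exact mul_nonneg hc (hg ω t)⟩)]
  · simp only [hinf]
    exact hind'.measure_le_toReal_eq_integral hcW hY
  · simpa only [hinf] using hind'.measure_eq_eq_zero hcW hY hatom

theorem isLittleO_nhdsGE_of_tendsto_div {ρ : ℝ → ℝ} {p : ℝ} (hp : p ≠ 0) (h0 : ρ 0 = 0)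
    (h : Tendsto (fun u => ρ u / u ^ p) (𝓝[>] 0) (𝓝 0)) :
    ρ =o[𝓝[≥] 0] fun u => u ^ p := by
  refine (isLittleO_iff_tendsto' ?_).mpr ?_
  · filter_upwards [self_mem_nhdsWithin] with u hu hup
    rw [(Real.rpow_eq_zero hu hp).mp hup, h0]
  · rw [← Set.Ioi_insert, nhdsWithin_insert, tendsto_sup]
    exact ⟨by simpa [h0] using tendsto_pure_nhds (fun u => ρ u / u ^ p) 0, h⟩

theorem isLittleO_integral_comp_mul {Ω : Type*} [MeasurableSpace Ω] {μ : Measure Ω}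
    [IsFiniteMeasure μ] {ρ : ℝ → ℝ} {p : ℝ} (hp : 0 ≤ p) (hρ : ρ =o[𝓝[≥] 0] fun u => u ^ p)
    {W : Ω → ℝ} {K : ℝ} (hW0 : ∀ ω, 0 ≤ W ω) (hWK : ∀ ω, W ω ≤ K) :
    (fun c => ∫ ω, ρ (c * W ω) ∂μ) =o[𝓝[>] 0] fun c => c ^ p := by
  wlog hK : 0 ≤ K generalizing K
  · exact this (fun ω => (hWK ω).trans (le_max_left K 0)) (le_max_right K 0)
  refine IsLittleO.of_bound fun ε hε => ?_
  set C := K ^ p * μ.real Set.univ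
  have hC : 0 ≤ C := by positivity
  obtain ⟨u₀, hu₀, hρu₀⟩ := mem_nhdsGE_iff_exists_Ico_subset.mp
    (hρ.def (c := ε / (C + 1)) (by positivity))
  filter_upwards [Ioo_mem_nhdsGT (div_pos hu₀ (by positivity : (0:ℝ) < K + 1))] with c ⟨hc, hcu₀⟩
  have hcK : c * K < u₀ := by
    rw [lt_div_iff₀ (by positivity)] at hcu₀
    nlinarith
  have hbound : ∀ ω, ‖ρ (c * W ω)‖ ≤ ε / (C + 1) * (c ^ p * K ^ p) := by
    intro ω
    have hcW : 0 ≤ c * W ω := mul_nonneg hc.le (hW0 ω)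
    have hcWK : c * W ω ≤ c * K := mul_le_mul_of_nonneg_left (hWK ω) hc.le
    calc ‖ρ (c * W ω)‖ ≤ ε / (C + 1) * ‖(c * W ω) ^ p‖ := hρu₀ ⟨hcW, hcWK.trans_lt hcK⟩
      _ ≤ ε / (C + 1) * (c ^ p * K ^ p) := by
        rw [Real.norm_of_nonneg (by positivity), ← Real.mul_rpow hc.le hK]
        gcongr
  calc ‖∫ ω, ρ (c * W ω) ∂μ‖ ≤ ε / (C + 1) * (c ^ p * K ^ p) * μ.real Set.univ :=
        norm_integral_le_of_norm_le_const (Eventually.of_forall hbound)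
    _ = ε * c ^ p * (C / (C + 1)) := by ring
    _ ≤ ε * ‖c ^ p‖ := by
        rw [Real.norm_of_nonneg (by positivity)]
        exact mul_le_of_le_one_right (by positivity)
          ((div_le_one (by positivity)).mpr (by linarith))

theorem isLittleO_integral_expansion {Ω : Type*} [MeasurableSpace Ω] {μ : Measure Ω}
    [IsFiniteMeasure μ] {H : ℝ → ℝ} {A p : ℝ} (hp : 0 ≤ p)
    (hH : (fun u => H u - u - A * u ^ p) =o[𝓝[≥] 0] fun u => u ^ p)
    (hH_meas : Measurable H) {C : ℝ} (hH_bdd : ∀ u, ‖H u‖ ≤ C)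
    {W : Ω → ℝ} (hW : Measurable W) {K : ℝ} (hW0 : ∀ ω, 0 ≤ W ω) (hWK : ∀ ω, W ω ≤ K) :
    (fun c => ∫ ω, H (c * W ω) ∂μ - c * ∫ ω, W ω ∂μ - A * c ^ p * ∫ ω, W ω ^ p ∂μ)
      =o[𝓝[>] 0] fun c => c ^ p := by
  have hbound : ∀ q : ℝ, 0 ≤ q → Integrable (fun ω => W ω ^ q) μ := fun q hq =>
    .of_bound (hW.pow_const q).aestronglyMeasurable (|K| ^ q) (.of_forall fun ω => by
      rw [Real.norm_of_nonneg (Real.rpow_nonneg (hW0 ω) q)]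
      exact Real.rpow_le_rpow (hW0 ω) ((hWK ω).trans (le_abs_self K)) hq)
  refine (isLittleO_integral_comp_mul (μ := μ) hp hH hW0 hWK).congr' ?_ .rfl
  filter_upwards [self_mem_nhdsWithin] with c (hc : 0 < c)
  have hW1 : Integrable W μ := by simpa using hbound 1 zero_le_one
  have hHW : Integrable (fun ω => H (c * W ω)) μ :=
    .of_bound (hH_meas.comp (hW.const_mul c)).aestronglyMeasurable C (.of_forall fun _ => hH_bdd _)
  simp_rw [Real.mul_rpow hc.le (hW0 _), ← mul_assoc, ← integral_const_mul]
  have hlin : Integrable (fun ω => H (c * W ω) - c * W ω) μ := hHW.sub (hW1.const_mul c)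
  rw [integral_sub hlin ((hbound p hp).const_mul _), integral_sub hHW (hW1.const_mul c)]

theorem lt_ite_max_neg_div_iff {a y z M : ℝ} (hy : 0 < y) (hz : 0 ≤ z) (hMa : M ≤ a) :
    a < (if z = 0 then M else max (-y / z) M) ↔ y < -a * z := by
  split_ifs with h
  · simpa [h] using iff_of_false hMa.not_gt hy.le.not_gt
  · rw [lt_max_iff, or_iff_left hMa.not_gt, lt_div_iff₀ (lt_of_le_of_ne hz (Ne.symm h))]
    constructor <;> intro <;> linarith

theorem setOf_forall_mul_lt_eq {Ω ι : Type*} {X Z : Ω → ι → ℝ} {Y : Ω → ℝ} {M : ℝ}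
    (hX : ∀ ω t, X ω t = if Z ω t = 0 then M else max (-(Y ω) / Z ω t) M)
    (hY : ∀ ω, 0 < Y ω) (hZ : ∀ ω t, 0 ≤ Z ω t) {f : ι → ℝ} (hf : ∀ t, f t ≤ 0) {B c : ℝ}
    (hB : ∀ t, |f t| ≤ B) (hc : 0 ≤ c) (hcB : c * B ≤ -M) :
    {ω | ∀ t, c * f t < X ω t} = {ω | ∀ t, Y ω < c * (|f t| * Z ω t)} := by
  ext ω
  refine forall_congr' fun t => ?_
  have hM : M ≤ c * f t := by nlinarith [hB t, abs_of_nonpos (hf t)]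
  rw [hX, lt_ite_max_neg_div_iff (hY ω) (hZ ω t) hM, abs_of_nonpos (hf t)]
  ring_nf

theorem stmt13_general
    {Ω : Type*} [MeasurableSpace Ω] (P : Measure Ω) [IsProbabilityMeasure P]
    (Z : Ω → Set.Icc (0:ℝ) 1 → ℝ) (m : ℝ)
    (hZmeas : ∀ t, Measurable fun ω => Z ω t)
    (hZcont : ∀ ω, Continuous (Z ω))
    (hZbd : ∀ ω t, Z ω t ∈ Set.Icc (0:ℝ) m)
    (Y : Ω → ℝ) (hYmeas : Measurable Y) (hYpos : ∀ ω, 0 < Y ω)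
    (hindep : IndepFun Y Z P)
    (A δ : ℝ) (hδ : 0 < δ)
    (hHcont : Continuous fun u => (P {ω | Y ω ≤ u}).toReal)
    (hH : Tendsto
      (fun u => ((P {ω | Y ω ≤ u}).toReal - u - A * u ^ (1 + δ)) / u ^ (1 + δ))
      (𝓝[>] 0) (𝓝 0))
    (M : ℝ) (hM : M < 0)
    (X : Ω → Set.Icc (0:ℝ) 1 → ℝ)
    (hX : ∀ ω t, X ω t = if Z ω t = 0 then M else max (-(Y ω) / Z ω t) M) :
    ∃ ε₀ > (0:ℝ), ∀ f : Set.Icc (0:ℝ) 1 → ℝ,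
      (∃ B, ∀ t, |f t| ≤ B) → (∀ t, f t ≤ 0) →
      {t | ¬ ContinuousAt f t}.Finite → (⨆ t, |f t|) ≤ ε₀ →
      Tendsto (fun c : ℝ => c ^ (-(1 + δ)) *
          ((P {ω | ∀ t, c * f t < X ω t}).toReal
            - c * ∫ ω, (⨅ t, |f t| * Z ω t) ∂P
            - A * c ^ (1 + δ) * ∫ ω, (⨅ t, |f t| * Z ω t) ^ (1 + δ) ∂P))
        (𝓝[>] 0) (𝓝 0) := by
  refine ⟨1, one_pos, fun f ⟨B, hB⟩ hf_nonpos hf_disc _ => ?_⟩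
  have hg_nonneg : ∀ ω t, 0 ≤ |f t| * Z ω t := fun ω t => mul_nonneg (abs_nonneg _) (hZbd ω t).1
  have hg_bdd : ∀ ω, BddBelow (Set.range fun t => |f t| * Z ω t) :=
    fun ω => ⟨0, Set.forall_mem_range.mpr (hg_nonneg ω)⟩
  obtain ⟨hW_meas, hWY⟩ := measurable_and_indepFun_ciInf_mul hZmeas hindep hg_bdd
    hf_disc.countable fun ω t ht =>
      (continuous_abs.continuousAt.comp (not_not.mp ht)).mul (hZcont ω).continuousAt
  set W : Ω → ℝ := fun ω => ⨅ t, |f t| * Z ω t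
  have hW_le : ∀ ω, W ω ≤ B * m := fun ω =>
    let t₀ : Set.Icc (0:ℝ) 1 := ⟨0, by norm_num⟩
    (ciInf_le (hg_bdd ω) t₀).trans <|
      mul_le_mul (hB t₀) (hZbd ω t₀).2 (hZbd ω t₀).1 ((abs_nonneg _).trans (hB t₀))
  set H : ℝ → ℝ := fun u => (P {ω | Y ω ≤ u}).toReal
  have hcB : ∀ᶠ c in 𝓝[>] (0:ℝ), c * B < -M :=
    (((continuous_mul_const B).tendsto' 0 0 (zero_mul B)).mono_left nhdsWithin_le_nhds).eventually
      (gt_mem_nhds (neg_pos.mpr hM))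
  have hevent : ∀ᶠ c in 𝓝[>] 0,
      (P {ω | ∀ t, c * f t < X ω t}).toReal = ∫ ω, H (c * W ω) ∂P := by
    filter_upwards [self_mem_nhdsWithin, hcB] with c (hc : 0 < c) hcB
    rw [setOf_forall_mul_lt_eq hX hYpos (fun ω t => (hZbd ω t).1) hf_nonpos hB hc.le hcB.le]
    exact measure_forall_lt_mul_toReal_eq_integral hYmeas
      (measure_preimage_singleton_eq_zero_of_continuous_cdf hYmeas hHcont) hg_nonneg hW_meas hWY
      hc.le
  have hH0 : {ω | Y ω ≤ 0} = ∅ := Set.eq_empty_of_forall_notMem fun ω h => (hYpos ω).not_ge h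
  have hρ : (fun u => H u - u - A * u ^ (1 + δ)) =o[𝓝[≥] 0] fun u => u ^ (1 + δ) :=
    isLittleO_nhdsGE_of_tendsto_div (by positivity)
      (by simp [H, hH0, Real.zero_rpow (by positivity : (1:ℝ) + δ ≠ 0)]) hH
  have hH_bdd : ∀ u, ‖H u‖ ≤ 1 := fun u => by
    rw [Real.norm_of_nonneg ENNReal.toReal_nonneg]
    exact measureReal_le_one
  refine ((isLittleO_integral_expansion (μ := P) (by positivity) hρ hHcont.measurable hH_bdd hW_meas
    (fun ω => le_ciInf (hg_nonneg ω)) hW_le).tendsto_div_nhds_zero).congr' ?_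
  filter_upwards [hevent, self_mem_nhdsWithin] with c hc (hc0 : 0 < c)
  rw [hc, Real.rpow_neg hc0.le, div_eq_inv_mul]

/-- the process `X = max(-Y/Z, M)`, with `Y > 0` independent of the
generator `Z` and with df `H(u) = u + A u^{1+δ} + o(u^{1+δ})` as `u ↓ 0`, satisfies the
`δ`-neighborhood condition (C):
`P(X > cf) = c E[inf_t(|f(t)|Z_t)] + A c^{1+δ} E[(inf_t(|f(t)|Z_t))^{1+δ}] + o(c^{1+δ})`. -/
theorem stmt13
    {Ω : Type*} [MeasurableSpace Ω] (P : Measure Ω) [IsProbabilityMeasure P]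
    (Z : Ω → Set.Icc (0:ℝ) 1 → ℝ) (m : ℝ) (hm : 1 ≤ m)
    (hZmeas : ∀ t, Measurable fun ω => Z ω t)
    (hZcont : ∀ ω, Continuous (Z ω))
    (hZbd : ∀ ω t, Z ω t ∈ Set.Icc (0:ℝ) m)
    (hZmean : ∀ t, ∫ ω, Z ω t ∂P = 1)
    (Y : Ω → ℝ) (hYmeas : Measurable Y) (hYpos : ∀ ω, 0 < Y ω)
    (hindep : IndepFun Y Z P)
    (A δ : ℝ) (hδ : 0 < δ)
    (hHcont : Continuous fun u => (P {ω | Y ω ≤ u}).toReal)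
    (hH : Tendsto
      (fun u => ((P {ω | Y ω ≤ u}).toReal - u - A * u ^ (1 + δ)) / u ^ (1 + δ))
      (𝓝[>] 0) (𝓝 0))
    (M : ℝ) (hM : M < 0)
    (X : Ω → Set.Icc (0:ℝ) 1 → ℝ)
    (hX : ∀ ω t, X ω t = if Z ω t = 0 then M else max (-(Y ω) / Z ω t) M) :
    ∃ ε₀ > (0:ℝ), ∀ f : Set.Icc (0:ℝ) 1 → ℝ,
      (∃ B, ∀ t, |f t| ≤ B) → (∀ t, f t ≤ 0) →
      {t | ¬ ContinuousAt f t}.Finite → (⨆ t, |f t|) ≤ ε₀ →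
      Tendsto (fun c : ℝ => c ^ (-(1 + δ)) *
          ((P {ω | ∀ t, c * f t < X ω t}).toReal
            - c * ∫ ω, (⨅ t, |f t| * Z ω t) ∂P
            - A * c ^ (1 + δ) * ∫ ω, (⨅ t, |f t| * Z ω t) ^ (1 + δ) ∂P))
        (𝓝[>] 0) (𝓝 0) :=
  stmt13_general P Z m hZmeas hZcont hZbd Y hYmeas hYpos hindep A δ hδ hHcont hH M hM X hX
end

section
/- Let ψ(s) = (1/2)exp(−|s|) for s ∈ ℝ and f(t) = −exp(−t) for t ∈ [0,1], and for β ≥ 0 set T(β) = ∫_ℝ inf_{t∈[0,1]}(|f(t)| ψ(s − βt)) ds = ∫_ℝ inf_{t∈[0,1]}( e^{−t} · (1/2) e^{−|s−βt|} ) ds. Then T(β) = exp(−1) for every β ∈ [0,1], while T(β) = exp(−(1+β)/2) for every β > 1. -/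
/-!
The map `t ↦ t + |s - β t|` is convex, so on `[0, 1]` it is maximal at an endpoint; hence the
infimum in `T(β)` equals `exp (-max |s| (1 + |s - β|)) / 2`. This profile is `c eˢ` to the left
of a point `m` and `d e⁻ˢ` to the right of it, with `m = β` when `β ≤ 1` and `m = (1 + β) / 2`
when `β > 1`, and the two exponential tails integrate in closed form.
-/

open MeasureTheory Real

lemma add_abs_sub_mul_le_max {t : ℝ} (ht : t ∈ Set.Icc (0 : ℝ) 1) (β s : ℝ) :
    t + |s - β * t| ≤ max |s| (1 + |s - β|) := by
  obtain ⟨ht0, ht1⟩ := ht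
  have hconv : |s - β * t| ≤ (1 - t) * |s| + t * |s - β| :=
    calc |s - β * t| = |(1 - t) * s + t * (s - β)| := by ring_nf
      _ ≤ |(1 - t) * s| + |t * (s - β)| := abs_add_le _ _
      _ = (1 - t) * |s| + t * |s - β| := by
        rw [abs_mul, abs_mul, abs_of_nonneg (by linarith), abs_of_nonneg ht0]
  nlinarith [le_max_left |s| (1 + |s - β|), le_max_right |s| (1 + |s - β|)]

lemma iInf_exp_mul_half_exp_abs (β s : ℝ) :
    ⨅ t : Set.Icc (0 : ℝ) 1, exp (-(t : ℝ)) * ((1 / 2) * exp (-|s - β * (t : ℝ)|))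
      = (1 / 2) * exp (-max |s| (1 + |s - β|)) := by
  have hform (t : ℝ) : exp (-t) * ((1 / 2) * exp (-|s - β * t|))
      = (1 / 2) * exp (-(t + |s - β * t|)) := by
    rw [neg_add, exp_add]; ring
  simp_rw [hform]
  apply le_antisymm
  · have hbdd : BddBelow (Set.range fun t : Set.Icc (0 : ℝ) 1 =>
        (1 / 2) * exp (-((t : ℝ) + |s - β * t|))) :=
      ⟨0, by rintro _ ⟨t, rfl⟩; positivity⟩
    rcases le_total |s| (1 + |s - β|) with h | h
    · refine (ciInf_le hbdd ⟨1, by norm_num⟩).trans_eq ?_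
      simp [max_eq_right h]
    · refine (ciInf_le hbdd ⟨0, by norm_num⟩).trans_eq ?_
      simp [max_eq_left h]
  · refine le_ciInf fun t => ?_
    gcongr
    exact add_abs_sub_mul_le_max t.2 β s

lemma integral_eq_of_eqOn_exp_Iic_of_eqOn_exp_neg_Ioi {G : ℝ → ℝ} {m c d : ℝ}
    (hleft : Set.EqOn G (fun s => c * exp s) (Set.Iic m))
    (hright : Set.EqOn G (fun s => d * exp (-s)) (Set.Ioi m)) :
    ∫ s, G s = c * exp m + d * exp (-m) := by
  have hIic : IntegrableOn G (Set.Iic m) :=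
    IntegrableOn.congr_fun ((integrableOn_exp_Iic m).const_mul c) hleft.symm measurableSet_Iic
  have hIoi : IntegrableOn G (Set.Ioi m) := by
    have hexp : IntegrableOn (fun s => exp (-s)) (Set.Ioi m) := by
      simpa using exp_neg_integrableOn_Ioi m one_pos
    exact IntegrableOn.congr_fun (hexp.const_mul d) hright.symm measurableSet_Ioi
  rw [← intervalIntegral.integral_Iic_add_Ioi hIic hIoi,
    setIntegral_congr_fun measurableSet_Iic hleft, setIntegral_congr_fun measurableSet_Ioi hright,
    integral_const_mul, integral_const_mul, integral_exp_Iic, integral_exp_neg_Ioi]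

section Profile

variable {β s : ℝ}

lemma max_abs_eq_of_le_left (hβ : 0 ≤ β) (hsβ : s ≤ β) (hs : s ≤ (1 + β) / 2) :
    max |s| (1 + |s - β|) = 1 + β - s := by
  rw [abs_of_nonpos (by linarith : s - β ≤ 0), max_eq_right] <;>
    cases abs_cases s <;> linarith

lemma max_abs_eq_of_le_right (hβ0 : 0 ≤ β) (hβ1 : β ≤ 1) (hsβ : β ≤ s) :
    max |s| (1 + |s - β|) = 1 + s - β := by
  rw [abs_of_nonneg (by linarith : 0 ≤ s - β), max_eq_right] <;>
    cases abs_cases s <;> linarith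

lemma max_abs_eq_of_one_le (hβ : 1 ≤ β) (hs : (1 + β) / 2 ≤ s) :
    max |s| (1 + |s - β|) = s := by
  rw [abs_of_nonneg (by linarith : 0 ≤ s), max_eq_left]
  cases abs_cases (s - β) <;> linarith

end Profile

lemma integral_half_exp_neg_max_of_le_one {β : ℝ} (hβ : β ∈ Set.Icc (0 : ℝ) 1) :
    ∫ s, (1 / 2) * exp (-max |s| (1 + |s - β|)) = exp (-1) := by
  obtain ⟨hβ0, hβ1⟩ := hβ
  have hI := integral_eq_of_eqOn_exp_Iic_of_eqOn_exp_neg_Ioi (m := β)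
    (c := (1 / 2) * exp (-(1 + β))) (d := (1 / 2) * exp (β - 1))
    (G := fun s => (1 / 2) * exp (-max |s| (1 + |s - β|)))
    (fun s (hs : s ≤ β) => by
      simp only [max_abs_eq_of_le_left hβ0 hs (by linarith), mul_assoc, ← exp_add]
      ring_nf)
    (fun s (hs : β < s) => by
      simp only [max_abs_eq_of_le_right hβ0 hβ1 hs.le, mul_assoc, ← exp_add]
      ring_nf)
  rw [hI, mul_assoc, mul_assoc, ← exp_add, ← exp_add]
  ring_nf

lemma integral_half_exp_neg_max_of_one_lt {β : ℝ} (hβ : 1 < β) :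
    ∫ s, (1 / 2) * exp (-max |s| (1 + |s - β|)) = exp (-((1 + β) / 2)) := by
  have hI := integral_eq_of_eqOn_exp_Iic_of_eqOn_exp_neg_Ioi (m := (1 + β) / 2)
    (c := (1 / 2) * exp (-(1 + β))) (d := 1 / 2)
    (G := fun s => (1 / 2) * exp (-max |s| (1 + |s - β|)))
    (fun s (hs : s ≤ (1 + β) / 2) => by
      simp only [max_abs_eq_of_le_left (by linarith) (by linarith) hs, mul_assoc, ← exp_add]
      ring_nf)
    (fun s (hs : (1 + β) / 2 < s) => by
      simp only [max_abs_eq_of_one_le hβ.le hs.le])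
  rw [hI, mul_assoc, ← exp_add]
  ring_nf

/-- for `ψ(s) = exp(-|s|)/2` and `f(t) = -exp(-t)`, the functional
`T(β) = ∫ inf_{t∈[0,1]}(|f(t)| ψ(s-βt)) ds` equals `exp(-1)` for all `β ∈ [0,1]` and
`exp(-(1+β)/2)` for `β > 1`. -/
theorem stmt17 :
    (∀ β ∈ Set.Icc (0:ℝ) 1,
      (∫ s, ⨅ t : Set.Icc (0:ℝ) 1,
          Real.exp (-(t : ℝ)) * ((1 / 2) * Real.exp (-|s - β * (t : ℝ)|)))
        = Real.exp (-1))
    ∧ (∀ β : ℝ, 1 < β →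
      (∫ s, ⨅ t : Set.Icc (0:ℝ) 1,
          Real.exp (-(t : ℝ)) * ((1 / 2) * Real.exp (-|s - β * (t : ℝ)|)))
        = Real.exp (-((1 + β) / 2))) := by
  simp_rw [iInf_exp_mul_half_exp_abs]
  exact ⟨fun β hβ => integral_half_exp_neg_max_of_le_one hβ,
    fun β hβ => integral_half_exp_neg_max_of_one_lt hβ⟩
end
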